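/- arXiv:1406.0230 — 2 statements merged into one kernel-verified Lean document; each statement's English description precedes it below -/
import Mathlib

section
/- Let f be a Borel-measurable function on [0,1]^d of bounded HK-variation, let μ be a normalized Borel measure on [0,1]^d, and let x_1,…,x_N be points in [0,1]^d. Then |(1/N)·Σ_{n=1}^N f(x_n) − ∫_{[0,1]^d} f dμ| ≤ V_HK(f) · D_N*(x_1,…,x_N;μ). -/
open MeasureTheory Finset

noncomputable section

/-- The quasi-volume `Δ` of `f` over the box `[a,b]` in the coordinates of `S`;
the coordinates outside `S` are fixed according to the anchor point `p`. -/
def quasiVol {d : ℕ} (f : (Fin d → ℝ) → ℝ) (S : Finset (Fin d)) (p a b : Fin d → ℝ) : ℝ :=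
  ∑ T ∈ S.powerset, (-1 : ℝ) ^ T.card *
    f (fun i => if i ∈ S then (if i ∈ T then a i else b i) else p i)

/-- A grid (a partition generated by one-dimensional partitions of the sides) of the
box `[lo, hi]` in the coordinates of `S`. -/
structure Grid (d : ℕ) (S : Finset (Fin d)) (lo hi : Fin d → ℝ) where
  m : Fin d → ℕ
  t : Fin d → ℕ → ℝ
  mono : ∀ i ∈ S, ∀ j k : ℕ, j ≤ k → k ≤ m i → t i j ≤ t i k
  first : ∀ i ∈ S, t i 0 = lo i
  last : ∀ i ∈ S, t i (m i) = hi i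

/-- The sum, over all cells of a grid, of the absolute value of the quasi-volume of the cell. -/
def gridSum {d : ℕ} (f : (Fin d → ℝ) → ℝ) (S : Finset (Fin d)) (p lo hi : Fin d → ℝ)
    (G : Grid d S lo hi) : ℝ :=
  ∑ k ∈ Fintype.piFinset (fun i => Finset.range (if i ∈ S then G.m i else 1)),
    |quasiVol f S p (fun i => G.t i (k i)) (fun i => G.t i (k i + 1))|

/-- The variation in the sense of Vitali of `f` on the face of the box `[lo, hi]` with active
coordinates `S`, the remaining coordinates being fixed according to the anchor `p`:
the supremum of `gridSum` over all grids. -/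
def vitaliVar {d : ℕ} (f : (Fin d → ℝ) → ℝ) (S : Finset (Fin d)) (p lo hi : Fin d → ℝ) : ℝ :=
  sSup (Set.range (gridSum f S p lo hi))

/-- The Vitali variation on the face `(S, p)` of `[lo, hi]` is bounded (finite). -/
def BddVitali {d : ℕ} (f : (Fin d → ℝ) → ℝ) (S : Finset (Fin d)) (p lo hi : Fin d → ℝ) : Prop :=
  BddAbove (Set.range (gridSum f S p lo hi))

/-- Hardy–Krause-type variation of `f` on the box `[lo, hi]` with anchor `p`: the sum, over all
nonempty sets `S` of coordinates, of the Vitali variation of the restriction of `f` to the face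
of `[lo, hi]` whose coordinates outside `S` are fixed according to `p`. -/
def hkVarOn {d : ℕ} (f : (Fin d → ℝ) → ℝ) (p lo hi : Fin d → ℝ) : ℝ :=
  ∑ S ∈ (Finset.univ : Finset (Fin d)).powerset.erase ∅, vitaliVar f S p lo hi

/-- All the Vitali variations occurring in `hkVarOn` are bounded. -/
def BddHKVarOn {d : ℕ} (f : (Fin d → ℝ) → ℝ) (p lo hi : Fin d → ℝ) : Prop :=
  ∀ S ∈ (Finset.univ : Finset (Fin d)).powerset.erase ∅, BddVitali f S p lo hi

/-- The Hardy–Krause variation of `f` on `[0,1]^d`, anchored at `1`. -/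
def hkVar {d : ℕ} (f : (Fin d → ℝ) → ℝ) : ℝ := hkVarOn f 1 0 1

/-- `f` has bounded Hardy–Krause variation (anchored at `1`). -/
def BddHKVar {d : ℕ} (f : (Fin d → ℝ) → ℝ) : Prop := BddHKVarOn f 1 0 1

/-- The Hardy–Krause variation of `f` on the box `[0, a]`, anchored at `0`. -/
def hkVar0On {d : ℕ} (f : (Fin d → ℝ) → ℝ) (a : Fin d → ℝ) : ℝ := hkVarOn f 0 0 a

/-- The Hardy–Krause variation of `f` on `[0,1]^d`, anchored at `0`. -/
def hkVar0 {d : ℕ} (f : (Fin d → ℝ) → ℝ) : ℝ := hkVarOn f 0 0 1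

/-- `f` has bounded Hardy–Krause variation anchored at `0`. -/
def BddHKVar0 {d : ℕ} (f : (Fin d → ℝ) → ℝ) : Prop := BddHKVarOn f 0 0 1

/-- `f` is completely monotone: every quasi-volume of an axis-parallel box contained in a face
of `[0,1]^d` (coordinates outside the active set `S` being fixed at `0` or `1`) is nonnegative. -/
def CompletelyMonotone {d : ℕ} (f : (Fin d → ℝ) → ℝ) : Prop :=
  ∀ S : Finset (Fin d), S.Nonempty → ∀ p : Fin d → ℝ, (∀ i ∉ S, p i = 0 ∨ p i = 1) →
    ∀ a b : Fin d → ℝ, a ∈ Set.Icc (0 : Fin d → ℝ) 1 → b ∈ Set.Icc (0 : Fin d → ℝ) 1 →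
      a ≤ b → 0 ≤ quasiVol f S p a b

/-- `f` is coordinatewise right-continuous at every point of `[0,1]^d`. -/
def RightCts {d : ℕ} (f : (Fin d → ℝ) → ℝ) : Prop :=
  ∀ x ∈ Set.Icc (0 : Fin d → ℝ) 1, ∀ i : Fin d,
    Filter.Tendsto (fun y : ℝ => f (Function.update x i y))
      (nhdsWithin (x i) (Set.Icc (x i) 1)) (nhds (f x))

/-- The star-discrepancy of the points `x 1, …, x N` with respect to the measure `μ`. -/
def starDisc {d : ℕ} (N : ℕ) (x : Fin N → Fin d → ℝ) (μ : Measure (Fin d → ℝ)) : ℝ :=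
  ⨆ a : Set.Icc (0 : Fin d → ℝ) 1,
    |(∑ n : Fin N, Set.indicator (Set.Icc 0 (a : Fin d → ℝ)) (fun _ => (1 : ℝ)) (x n)) / N
      - (μ (Set.Icc 0 (a : Fin d → ℝ))).toReal|

/-!
For a finite set of levels in `[0,1]` containing `0` and `1`, rounding every coordinate up to the
next level turns `f` into a step function which is a finite combination of indicators of anchored
boxes `[0, a]`, the coefficients being signed quasi-volumes of the grid cells (inclusion–exclusion
anchored at `1`). For such a step function the integration error is a combination of local
discrepancies whose total weight is at most the HK-variation. If the coordinates of the points are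
among the levels, the step function agrees with `f` at the points.

Refining the levels makes the step functions converge to `f` on the cube: for `x ≤ y` one has
`|f y - f x| ≤ ∑ i, (g i (y i) - g i (x i))`, where the monotone function `g i c` sums the Vitali
variations of `f` on the boxes `[0, (1, …, c, …, 1)]` of the faces through `1` containing the
direction `i`. The discontinuities of the `g i` are countable; adding them one at a time to dyadic
levels gives pointwise convergence, and the step functions are bounded by `|f 1| + ∑ i, g i 1`,
so dominated convergence passes the inequality to `f`.
-/

namespace KoksmaHlawka

open Function Filter Topology

variable {d : ℕ}

section QuasiVolume

lemma quasiVol_congr (f : (Fin d → ℝ) → ℝ) {S : Finset (Fin d)} {p p' a a' b b' : Fin d → ℝ}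
    (hp : ∀ i ∉ S, p i = p' i) (ha : ∀ i ∈ S, a i = a' i) (hb : ∀ i ∈ S, b i = b' i) :
    quasiVol f S p a b = quasiVol f S p' a' b' := by
  refine sum_congr rfl fun T _ => ?_
  congr 2
  funext i
  by_cases hiS : i ∈ S
  · simp [hiS, ha i hiS, hb i hiS]
  · simp [hiS, hp i hiS]

@[simp]
lemma quasiVol_empty (f : (Fin d → ℝ) → ℝ) (p a b : Fin d → ℝ) : quasiVol f ∅ p a b = f p := by
  simp [quasiVol]

lemma quasiVol_insert (f : (Fin d → ℝ) → ℝ) {S : Finset (Fin d)} {i : Fin d} (hi : i ∉ S)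
    (p a b : Fin d → ℝ) :
    quasiVol f (insert i S) p a b
      = quasiVol f S (update p i (b i)) a b - quasiVol f S (update p i (a i)) a b := by
  unfold quasiVol
  rw [sum_powerset_insert hi, sub_eq_add_neg, ← sum_neg_distrib]
  congr 1
  · refine sum_congr rfl fun T hT => ?_
    have hiT : i ∉ T := fun h => hi (mem_powerset.mp hT h)
    congr 2
    funext l
    by_cases hl : l = i
    · subst hl; simp [hi, hiT]
    · by_cases hlS : l ∈ S <;> simp [hlS, hl]
  · refine sum_congr rfl fun T hT => ?_
    have hiT : i ∉ T := fun h => hi (mem_powerset.mp hT h)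
    rw [card_insert_of_notMem hiT, pow_succ]
    have : (fun l => if l ∈ insert i S then (if l ∈ insert i T then a l else b l) else p l)
        = fun l => if l ∈ S then (if l ∈ T then a l else b l) else update p i (a i) l := by
      funext l
      by_cases hl : l = i
      · subst hl; simp [hi]
      · by_cases hlS : l ∈ S <;> simp [hlS, hl]
    rw [this]
    ring

lemma quasiVol_comp_update (f : (Fin d → ℝ) → ℝ) {S : Finset (Fin d)} {i : Fin d} (hi : i ∉ S)
    (c : ℝ) (p a b : Fin d → ℝ) :
    quasiVol (fun w => f (update w i c)) S p a b = quasiVol f S (update p i c) a b := by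
  refine sum_congr rfl fun T _ => ?_
  dsimp only
  congr 2
  funext l
  by_cases hl : l = i
  · subst hl; simp [hi]
  · by_cases hlS : l ∈ S <;> simp [hlS, hl]

lemma quasiVol_sub (F G : (Fin d → ℝ) → ℝ) (S : Finset (Fin d)) (p a b : Fin d → ℝ) :
    quasiVol (fun w => F w - G w) S p a b = quasiVol F S p a b - quasiVol G S p a b := by
  simp only [quasiVol, ← sum_sub_distrib, mul_sub]

lemma quasiVol_split (f : (Fin d → ℝ) → ℝ) {S : Finset (Fin d)} {i : Fin d} (hiS : i ∈ S)
    (p a b : Fin d → ℝ) (c : ℝ) :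
    quasiVol f S p a b
      = quasiVol f S p a (update b i c) + quasiVol f S p (update a i c) b := by
  have hi : i ∉ S.erase i := notMem_erase i S
  have hne : ∀ l ∈ S.erase i, l ≠ i := fun l hl => ne_of_mem_erase hl
  have ha : ∀ q x y, quasiVol f (S.erase i) q (update x i c) y = quasiVol f (S.erase i) q x y :=
    fun q x y => quasiVol_congr f (fun _ _ => rfl) (fun l hl => update_of_ne (hne l hl) _ _)
      (fun _ _ => rfl)
  have hb : ∀ q x y, quasiVol f (S.erase i) q x (update y i c) = quasiVol f (S.erase i) q x y :=
    fun q x y => quasiVol_congr f (fun _ _ => rfl) (fun _ _ => rfl)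
      (fun l hl => update_of_ne (hne l hl) _ _)
  rw [← insert_erase hiS, quasiVol_insert f hi, quasiVol_insert f hi, quasiVol_insert f hi]
  simp only [update_self, ha, hb]
  ring

theorem sum_powerset_neg_one_pow_mul_quasiVol (f : (Fin d → ℝ) → ℝ) (U : Finset (Fin d))
    {a p : Fin d → ℝ} (hap : ∀ l ∉ U, a l = p l) :
    ∑ S ∈ U.powerset, (-1 : ℝ) ^ S.card * quasiVol f S p a p = f a := by
  induction U using Finset.induction_on generalizing p with
  | empty =>
    simp only [powerset_empty, sum_singleton, card_empty, pow_zero, one_mul, quasiVol_empty]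
    exact congrArg f (funext fun l => (hap l (notMem_empty l)).symm)
  | @insert i U hi ih =>
    set p' := update p i (a i)
    have hstep : ∀ S ∈ U.powerset, quasiVol f (insert i S) p a p
        = quasiVol f S p a p - quasiVol f S p' a p' := by
      intro S hS
      have hiS : i ∉ S := fun h => hi (mem_powerset.mp hS h)
      rw [quasiVol_insert f hiS, update_eq_self]
      congr 1
      exact quasiVol_congr f (fun _ _ => rfl) (fun _ _ => rfl)
        (fun l hl => (update_of_ne (ne_of_mem_of_not_mem hl hiS) _ _).symm)
    rw [sum_powerset_insert hi, ← ih (p := p') fun l hl => ?_, ← sum_add_distrib]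
    · refine sum_congr rfl fun S hS => ?_
      have hiS : i ∉ S := fun h => hi (mem_powerset.mp hS h)
      rw [hstep S hS, card_insert_of_notMem hiS, pow_succ]
      ring
    · by_cases hli : l = i
      · subst hli; exact (update_self l (a l) p).symm
      · exact (hap l (by simp [hli, hl])).trans (update_of_ne hli _ _).symm

end QuasiVolume

section Cells

lemma sum_piFinset_update {ι M : Type*} [Fintype ι] [DecidableEq ι] [AddCommMonoid M]
    (F : ι → Finset ℕ) (i : ι) (A : Finset ℕ) (φ : (ι → ℕ) → M) :
    ∑ k ∈ Fintype.piFinset (update F i A), φ k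
      = ∑ c ∈ A, ∑ k ∈ Fintype.piFinset (update F i {0}), φ (update k i c) := by
  rw [← sum_product']
  refine sum_nbij' (fun k => (k i, update k i 0)) (fun x => update x.2 i x.1) ?_ ?_ ?_ ?_ ?_
  · intro k hk
    simp only [Fintype.mem_piFinset, mem_product] at hk ⊢
    refine ⟨by simpa using hk i, fun l => ?_⟩
    by_cases hl : l = i
    · subst hl; simp
    · simpa [hl] using hk l
  · rintro ⟨c, k⟩ hk
    simp only [Fintype.mem_piFinset, mem_product] at hk ⊢
    intro l
    by_cases hl : l = i
    · subst hl; simpa using hk.1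
    · simpa [hl] using hk.2 l
  · intro k _
    simp
  · rintro ⟨c, k⟩ hk
    simp only [Fintype.mem_piFinset, mem_product] at hk
    have : k i = 0 := by simpa using hk.2 i
    simp [← this]
  · intro k _
    simp

/-- An inactive coordinate `l ∉ S` carries the dummy cell index `0`. -/
def cellRanges (S : Finset (Fin d)) (m : Fin d → ℕ) : Fin d → Finset ℕ :=
  fun l => if l ∈ S then range (m l) else {0}

def cellVol (f : (Fin d → ℝ) → ℝ) (S : Finset (Fin d)) (p : Fin d → ℝ) (t : Fin d → ℕ → ℝ)
    (k : Fin d → ℕ) : ℝ :=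
  quasiVol f S p (fun l => t l (k l)) (fun l => t l (k l + 1))

def cellSum (f : (Fin d → ℝ) → ℝ) (S : Finset (Fin d)) (p : Fin d → ℝ) (m : Fin d → ℕ)
    (t : Fin d → ℕ → ℝ) : ℝ :=
  ∑ k ∈ Fintype.piFinset (cellRanges S m), |cellVol f S p t k|

lemma cellVol_insert_update (f : (Fin d → ℝ) → ℝ) {S : Finset (Fin d)} {i : Fin d} (hi : i ∉ S)
    (p : Fin d → ℝ) (t : Fin d → ℕ → ℝ) (k : Fin d → ℕ) (c : ℕ) :
    cellVol f (insert i S) p t (update k i c)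
      = cellVol f S (update p i (t i (c + 1))) t k - cellVol f S (update p i (t i c)) t k := by
  have hk : ∀ l ∈ S, update k i c l = k l := fun l hl =>
    update_of_ne (ne_of_mem_of_not_mem hl hi) _ _
  rw [cellVol, quasiVol_insert f hi]
  simp only [update_self]
  congr 1 <;> exact quasiVol_congr f (fun _ _ => rfl) (fun l hl => by rw [hk l hl])
    (fun l hl => by rw [hk l hl])

theorem quasiVol_eq_sum_cellVol (f : (Fin d → ℝ) → ℝ) (S : Finset (Fin d)) (p : Fin d → ℝ)
    (t : Fin d → ℕ → ℝ) {j m : Fin d → ℕ} (hjm : ∀ l ∈ S, j l ≤ m l) :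
    quasiVol f S p (fun l => t l (j l)) (fun l => t l (m l))
      = ∑ k ∈ Fintype.piFinset (fun l => if l ∈ S then Ico (j l) (m l) else {0}),
          cellVol f S p t k := by
  induction S using Finset.induction_on generalizing p with
  | empty => simp [cellVol]
  | @insert i S hi ih =>
    have hfam : (fun l => if l ∈ insert i S then Ico (j l) (m l) else {0})
        = update (fun l => if l ∈ S then Ico (j l) (m l) else {0}) i (Ico (j i) (m i)) := by
      funext l
      by_cases hl : l = i
      · subst hl; simp
      · simp [hl]
    have hfam0 : update (fun l => if l ∈ S then Ico (j l) (m l) else ({0} : Finset ℕ)) i {0}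
        = fun l => if l ∈ S then Ico (j l) (m l) else {0} := by
      rw [update_eq_self_iff]; simp [hi]
    rw [quasiVol_insert f hi, ← sum_Ico_sub (fun c => quasiVol f S (update p i (t i c))
        (fun l => t l (j l)) (fun l => t l (m l))) (hjm i (mem_insert_self i S)),
      hfam, sum_piFinset_update, hfam0]
    refine sum_congr rfl fun c _ => ?_
    rw [ih _ fun l hl => hjm l (mem_insert_of_mem hl),
      ih _ fun l hl => hjm l (mem_insert_of_mem hl), ← sum_sub_distrib]
    exact sum_congr rfl fun k _ => (cellVol_insert_update f hi p t k c).symm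

structure IsGrid (S : Finset (Fin d)) (lo hi : Fin d → ℝ) (m : Fin d → ℕ) (t : Fin d → ℕ → ℝ) :
    Prop where
  mono : ∀ i ∈ S, MonotoneOn (t i) (Set.Iic (m i))
  first : ∀ i ∈ S, t i 0 = lo i
  last : ∀ i ∈ S, t i (m i) = hi i

lemma _root_.Grid.isGrid {S : Finset (Fin d)} {lo hi : Fin d → ℝ} (G : Grid d S lo hi) :
    IsGrid S lo hi G.m G.t :=
  ⟨fun i hi _ _ _ hk hjk => G.mono i hi _ _ hjk hk, G.first, G.last⟩

def IsGrid.toGrid {S : Finset (Fin d)} {lo hi : Fin d → ℝ} {m : Fin d → ℕ} {t : Fin d → ℕ → ℝ}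
    (hG : IsGrid S lo hi m t) : Grid d S lo hi :=
  ⟨m, t, fun i hi _ _ hjk hk => hG.mono i hi (hjk.trans hk) hk hjk, hG.first, hG.last⟩

lemma IsGrid.subset {S T : Finset (Fin d)} {lo hi : Fin d → ℝ} {m : Fin d → ℕ}
    {t : Fin d → ℕ → ℝ} (hG : IsGrid S lo hi m t) (hT : T ⊆ S) : IsGrid T lo hi m t :=
  ⟨fun i hi => hG.mono i (hT hi), fun i hi => hG.first i (hT hi), fun i hi => hG.last i (hT hi)⟩

lemma IsGrid.mem_Icc {S : Finset (Fin d)} {lo hi : Fin d → ℝ} {m : Fin d → ℕ}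
    {t : Fin d → ℕ → ℝ} (hG : IsGrid S lo hi m t) {l : Fin d} (hl : l ∈ S) {j : ℕ}
    (hj : j ≤ m l) : t l j ∈ Set.Icc (lo l) (hi l) := by
  rw [← hG.first l hl, ← hG.last l hl]
  exact ⟨hG.mono l hl (Set.mem_Iic.mpr (Nat.zero_le _)) hj (Nat.zero_le _),
    hG.mono l hl hj (Set.mem_Iic.mpr le_rfl) hj⟩

lemma gridSum_eq_cellSum (f : (Fin d → ℝ) → ℝ) (S : Finset (Fin d)) (p lo hi : Fin d → ℝ)
    (G : Grid d S lo hi) : gridSum f S p lo hi G = cellSum f S p G.m G.t := by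
  have : (fun i => range (if i ∈ S then G.m i else 1)) = cellRanges S G.m := by
    funext l
    by_cases hl : l ∈ S <;> simp [cellRanges, hl]
  rw [gridSum, this]
  rfl

lemma IsGrid.cellSum_le_vitaliVar {f : (Fin d → ℝ) → ℝ} {S : Finset (Fin d)}
    {p lo hi : Fin d → ℝ} {m : Fin d → ℕ} {t : Fin d → ℕ → ℝ} (hG : IsGrid S lo hi m t)
    (hbdd : BddVitali f S p lo hi) : cellSum f S p m t ≤ vitaliVar f S p lo hi :=
  le_csSup hbdd ⟨hG.toGrid, gridSum_eq_cellSum f S p lo hi hG.toGrid⟩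

lemma nonempty_grid {S : Finset (Fin d)} {lo hi : Fin d → ℝ} (h : ∀ i ∈ S, lo i ≤ hi i) :
    Nonempty (Grid d S lo hi) :=
  ⟨IsGrid.toGrid (m := fun _ => 1) (t := fun i k => if k = 0 then lo i else hi i)
    ⟨fun i hi => monotoneOn_of_le_add_one Set.ordConnected_Iic fun k _ _ hk => by
      simp_all, fun _ _ => rfl, fun _ _ => rfl⟩⟩

end Cells

section Refinement

variable {f : (Fin d → ℝ) → ℝ} {S : Finset (Fin d)} {p lo hi : Fin d → ℝ} {m : Fin d → ℕ}
  {t : Fin d → ℕ → ℝ} {i : Fin d}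

def insertLevel (t : Fin d → ℕ → ℝ) (i : Fin d) (q : ℕ) (c : ℝ) : Fin d → ℕ → ℝ :=
  update t i fun k => if k ≤ q then t i k else if k = q + 1 then c else t i (k - 1)

@[simp]
lemma insertLevel_of_ne {l : Fin d} (q : ℕ) (c : ℝ) (h : l ≠ i) : insertLevel t i q c l = t l :=
  update_of_ne h _ _

lemma insertLevel_of_le {q k : ℕ} (c : ℝ) (h : k ≤ q) : insertLevel t i q c i k = t i k := by
  simp [insertLevel, h]

@[simp]
lemma insertLevel_succ (q : ℕ) (c : ℝ) : insertLevel t i q c i (q + 1) = c := by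
  simp [insertLevel]

lemma insertLevel_of_lt {q k : ℕ} (c : ℝ) (h : q + 1 < k) :
    insertLevel t i q c i k = t i (k - 1) := by
  simp [insertLevel, show ¬k ≤ q by omega, show k ≠ q + 1 by omega]

lemma IsGrid.insert (hG : IsGrid S lo hi m t) (hiS : i ∈ S) {q : ℕ} (hq : q < m i) {c : ℝ}
    (h₁ : t i q ≤ c) (h₂ : c ≤ t i (q + 1)) :
    IsGrid S lo hi (update m i (m i + 1)) (insertLevel t i q c) := by
  refine ⟨fun l hl => ?_, fun l hl => ?_, fun l hl => ?_⟩
  · by_cases hli : l = i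
    · subst hli
      refine monotoneOn_of_le_add_one Set.ordConnected_Iic fun k _ _ hk => ?_
      simp only [update_self, Set.mem_Iic] at hk
      rcases lt_trichotomy k q with hkq | rfl | hkq
      · rw [insertLevel_of_le c hkq.le, insertLevel_of_le c (show k + 1 ≤ q from hkq)]
        exact hG.mono l hl (by simp; omega) (by simp; omega) (by omega)
      · rw [insertLevel_of_le c le_rfl, insertLevel_succ]; exact h₁
      · rcases (Nat.succ_le_of_lt hkq).eq_or_lt with rfl | hkq'
        · rw [insertLevel_succ, insertLevel_of_lt c (by omega)]; exact h₂
        · rw [insertLevel_of_lt c hkq', insertLevel_of_lt c (by omega)]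
          exact hG.mono l hl (by simp; omega) (by simp; omega) (by omega)
    · simpa [hli] using hG.mono l hl
  · by_cases hli : l = i
    · subst hli; rw [insertLevel_of_le c (Nat.zero_le q)]; exact hG.first l hl
    · simpa [hli] using hG.first l hl
  · by_cases hli : l = i
    · subst hli
      rw [update_self, insertLevel_of_lt c (by omega), Nat.add_sub_cancel]
      exact hG.last l hl
    · simpa [hli] using hG.last l hl

lemma IsGrid.append (hG : IsGrid S lo hi m t) (hiS : i ∈ S) {c : ℝ} (hc : hi i ≤ c) :
    IsGrid S lo (update hi i c) (update m i (m i + 1)) (insertLevel t i (m i) c) := by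
  refine ⟨fun l hl => ?_, fun l hl => ?_, fun l hl => ?_⟩
  · by_cases hli : l = i
    · subst hli
      refine monotoneOn_of_le_add_one Set.ordConnected_Iic fun k _ _ hk => ?_
      simp only [update_self, Set.mem_Iic] at hk
      rcases (Nat.le_of_lt_succ hk).eq_or_lt with rfl | hkm
      · rw [insertLevel_of_le c le_rfl, insertLevel_succ, hG.last l hl]; exact hc
      · rw [insertLevel_of_le c hkm.le, insertLevel_of_le c (show k + 1 ≤ m l from hkm)]
        exact hG.mono l hl (by simp; omega) (by simp; omega) (by omega)
    · simpa [hli] using hG.mono l hl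
  · by_cases hli : l = i
    · subst hli; rw [insertLevel_of_le c (Nat.zero_le _)]; exact hG.first l hl
    · simpa [hli] using hG.first l hl
  · by_cases hli : l = i
    · subst hli; simp
    · simpa [hli] using hG.last l hl

def slabSum (f : (Fin d → ℝ) → ℝ) (S : Finset (Fin d)) (p : Fin d → ℝ) (m : Fin d → ℕ)
    (t : Fin d → ℕ → ℝ) (i : Fin d) (c : ℕ) : ℝ :=
  ∑ k ∈ Fintype.piFinset (update (cellRanges S m) i {0}), |cellVol f S p t (update k i c)|

lemma cellSum_eq_sum_slabSum (hiS : i ∈ S) :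
    cellSum f S p m t = ∑ c ∈ range (m i), slabSum f S p m t i c := by
  have : cellRanges S m = update (cellRanges S m) i (range (m i)) := by
    rw [eq_comm, update_eq_self_iff]; simp [cellRanges, hiS]
  rw [cellSum, this, sum_piFinset_update]
  rfl

lemma slabSum_update_cells (n c : ℕ) :
    slabSum f S p (update m i n) t i c = slabSum f S p m t i c := by
  have : update (cellRanges S (update m i n)) i {0} = update (cellRanges S m) i {0} := by
    funext l
    by_cases hli : l = i
    · subst hli; simp
    · simp [hli, cellRanges]
  rw [slabSum, this, slabSum]

lemma slabSum_congr {t' : Fin d → ℕ → ℝ} {c c' : ℕ} (ht : ∀ l ≠ i, t' l = t l)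
    (h₀ : t' i c' = t i c) (h₁ : t' i (c' + 1) = t i (c + 1)) :
    slabSum f S p m t' i c' = slabSum f S p m t i c := by
  refine sum_congr rfl fun k _ => ?_
  congr 1
  refine quasiVol_congr f (fun _ _ => rfl) (fun l _ => ?_) (fun l _ => ?_) <;>
  · by_cases hli : l = i
    · subst hli; simpa
    · simp [hli, ht l hli]

lemma cellSum_insertLevel_last (hiS : i ∈ S) (c : ℝ) :
    cellSum f S p (update m i (m i + 1)) (insertLevel t i (m i) c)
      = cellSum f S p m t + slabSum f S p m (insertLevel t i (m i) c) i (m i) := by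
  rw [cellSum_eq_sum_slabSum hiS, cellSum_eq_sum_slabSum hiS, update_self, sum_range_succ]
  simp only [slabSum_update_cells]
  congr 1
  refine sum_congr rfl fun k hk => slabSum_congr (fun l hl => insertLevel_of_ne _ _ hl)
    (insertLevel_of_le c ?_) (insertLevel_of_le c ?_) <;> simp at hk <;> omega

lemma sum_range_le_sum_range_succ {g h : ℕ → ℝ} {q M : ℕ} (hqM : q < M)
    (hlt : ∀ c < q, h c = g c) (hq : h q ≤ g q + g (q + 1)) (hgt : ∀ c, q < c → h c = g (c + 1)) :
    ∑ c ∈ range M, h c ≤ ∑ c ∈ range (M + 1), g c := by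
  induction M, Nat.succ_le_of_lt hqM using Nat.le_induction with
  | base =>
    rw [sum_range_succ, sum_range_succ, sum_range_succ,
      sum_congr rfl fun c hc => hlt c (by simpa using hc)]
    linarith
  | succ M hM ih =>
    rw [sum_range_succ h, sum_range_succ g (M + 1), hgt M (by omega)]
    linarith [ih (by omega)]

lemma cellSum_le_cellSum_insertLevel (hiS : i ∈ S) {q : ℕ} (hq : q < m i) (c : ℝ) :
    cellSum f S p m t ≤ cellSum f S p (update m i (m i + 1)) (insertLevel t i q c) := by
  rw [cellSum_eq_sum_slabSum hiS, cellSum_eq_sum_slabSum hiS, update_self]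
  simp only [slabSum_update_cells]
  refine sum_range_le_sum_range_succ hq
    (fun k hk => (slabSum_congr (fun l hl => insertLevel_of_ne _ _ hl) (insertLevel_of_le c hk.le)
      (insertLevel_of_le c hk)).symm) ?_
    (fun k hk => (slabSum_congr (fun l hl => insertLevel_of_ne _ _ hl)
      (by rw [insertLevel_of_lt c (by omega), Nat.add_sub_cancel])
      (by rw [insertLevel_of_lt c (by omega), Nat.add_sub_cancel])).symm)
  rw [slabSum, slabSum, slabSum, ← sum_add_distrib]
  refine sum_le_sum fun k _ => ?_
  rw [cellVol, quasiVol_split f hiS p _ _ c]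
  refine (abs_add_le _ _).trans (add_le_add (le_of_eq ?_) (le_of_eq ?_)) <;>
  · unfold cellVol
    congr 1
    refine quasiVol_congr f (fun _ _ => rfl) (fun l _ => ?_) (fun l _ => ?_) <;>
    · by_cases hli : l = i
      · subst hli
        simp [insertLevel_of_le, insertLevel_of_lt]
      · simp [hli]

end Refinement

section SubBoxes

variable {f : (Fin d → ℝ) → ℝ} {S : Finset (Fin d)} {p lo hi : Fin d → ℝ} {m : Fin d → ℕ}
  {t : Fin d → ℕ → ℝ} {i : Fin d}

lemma exists_lt_le_le {s : ℕ → ℝ} {M : ℕ} (hM : 0 < M) {z : ℝ} (h₀ : s 0 ≤ z) (h₁ : z ≤ s M) :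
    ∃ q < M, s q ≤ z ∧ z ≤ s (q + 1) := by
  classical
  have hex : ∃ q, z ≤ s (q + 1) := ⟨M - 1, by rwa [Nat.sub_add_cancel hM]⟩
  refine ⟨Nat.find hex, ?_, ?_, Nat.find_spec hex⟩
  · by_contra h
    exact Nat.find_min hex (by omega : M - 1 < Nat.find hex) (by rwa [Nat.sub_add_cancel hM])
  · cases hq : Nat.find hex with
    | zero => exact h₀
    | succ q => exact (not_le.mp (Nat.find_min hex (hq ▸ Nat.lt_succ_self q))).le

lemma IsGrid.exists_refinement (hG : IsGrid S lo hi m t) (z : Fin d → ℝ) {W : Finset (Fin d)}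
    (hW : W ⊆ S) (hz : ∀ l ∈ W, lo l ≤ z l ∧ z l ≤ hi l) :
    ∃ m' t', IsGrid S lo hi m' t' ∧ cellSum f S p m t ≤ cellSum f S p m' t' ∧
      ∀ l ∈ W, ∃ q ≤ m' l, t' l q = z l := by
  induction W using Finset.induction_on with
  | empty => exact ⟨m, t, hG, le_rfl, by simp⟩
  | @insert l W hl ih =>
    obtain ⟨m', t', hG', hle, hW'⟩ :=
      ih ((subset_insert l W).trans hW) fun l' hl' => hz l' (mem_insert_of_mem hl')
    have hlS := hW (mem_insert_self l W)
    obtain ⟨hzl₀, hzl₁⟩ := hz l (mem_insert_self l W)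
    rw [← hG'.first l hlS] at hzl₀
    rw [← hG'.last l hlS] at hzl₁
    rcases Nat.eq_zero_or_pos (m' l) with h0 | hpos
    · refine ⟨m', t', hG', hle, fun l' hl' => ?_⟩
      rcases mem_insert.mp hl' with rfl | hl'
      · exact ⟨0, Nat.zero_le _, le_antisymm hzl₀ (h0 ▸ hzl₁)⟩
      · exact hW' l' hl'
    · obtain ⟨q, hq, h₁, h₂⟩ := exists_lt_le_le hpos hzl₀ hzl₁
      refine ⟨update m' l (m' l + 1), insertLevel t' l q (z l), hG'.insert hlS hq h₁ h₂,
        hle.trans (cellSum_le_cellSum_insertLevel hlS hq _), fun l' hl' => ?_⟩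
      rcases mem_insert.mp hl' with rfl | hl'
      · exact ⟨q + 1, by simp; omega, insertLevel_succ _ _⟩
      · have hne : l' ≠ l := fun h => hl (h ▸ hl')
        obtain ⟨q', hq', e⟩ := hW' l' hl'
        exact ⟨q', by simpa [hne] using hq', by simpa [hne] using e⟩

lemma IsGrid.abs_quasiVol_le_slabSum (hG : IsGrid S lo hi m t) (hiS : i ∈ S) {z : Fin d → ℝ}
    (hz : ∀ l ∈ S, l ≠ i → ∃ q ≤ m l, t l q = z l) (v : ℝ) :
    |quasiVol f S p (update z i (hi i)) (update hi i v)|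
      ≤ slabSum f S p m (insertLevel t i (m i) v) i (m i) := by
  classical
  choose! qz hqz using hz
  set t' := insertLevel t i (m i) v
  set j : Fin d → ℕ := update qz i (m i)
  set m' : Fin d → ℕ := update m i (m i + 1)
  have hjm : ∀ l ∈ S, j l ≤ m' l := by
    intro l hl
    by_cases hli : l = i
    · subst hli; simp [j, m']
    · simpa [j, m', hli] using (hqz l hl hli).1
  have hbox : quasiVol f S p (update z i (hi i)) (update hi i v)
      = quasiVol f S p (fun l => t' l (j l)) (fun l => t' l (m' l)) := by
    refine quasiVol_congr f (fun _ _ => rfl) (fun l hl => ?_) (fun l hl => ?_)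
    · by_cases hli : l = i
      · subst hli; simp [j, t', insertLevel_of_le, hG.last l hl]
      · simp [j, t', hli, (hqz l hl hli).2]
    · by_cases hli : l = i
      · subst hli; simp [m', t']
      · simp [m', t', hli, hG.last l hl]
  have hfam : (fun l => if l ∈ S then Ico (j l) (m' l) else {0})
      = update (fun l => if l ∈ S then Ico (j l) (m' l) else ({0} : Finset ℕ)) i {m i} := by
    rw [eq_comm, update_eq_self_iff]; simp [hiS, j, m']
  rw [hbox, quasiVol_eq_sum_cellVol f S p t' hjm, hfam, sum_piFinset_update, sum_singleton]
  refine (abs_sum_le_sum_abs _ _).trans (sum_le_sum_of_subset_of_nonneg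
    (Fintype.piFinset_subset _ _ fun l => ?_) fun _ _ _ => abs_nonneg _)
  by_cases hli : l = i
  · subst hli; simp
  · by_cases hlS : l ∈ S
    · simpa [hli, hlS, cellRanges, j, m'] using Ico_subset_Ico_left (Nat.zero_le _)
    · simp [hli, hlS, cellRanges]

/-- Refine a grid of the lower box so that the coordinates of `z` are levels, then append the
level `v`: the result is a grid of the larger box whose new slab contains
`[update z i u, update hi i v]` as a union of cells. -/
theorem vitaliVar_add_abs_quasiVol_le (hiS : i ∈ S) {u v : ℝ} (huv : u ≤ v)
    (hbdd : BddVitali f S p lo (update hi i v)) (hlo : ∀ l ∈ S, lo l ≤ update hi i u l)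
    {z : Fin d → ℝ} (hz : ∀ l ∈ S, l ≠ i → lo l ≤ z l ∧ z l ≤ hi l) :
    vitaliVar f S p lo (update hi i u) + |quasiVol f S p (update z i u) (update hi i v)|
      ≤ vitaliVar f S p lo (update hi i v) := by
  have := nonempty_grid hlo
  rw [← le_sub_iff_add_le]
  refine csSup_le (Set.range_nonempty _) ?_
  rintro _ ⟨G, rfl⟩
  rw [le_sub_iff_add_le, gridSum_eq_cellSum]
  obtain ⟨m', t', hG', hle, hz'⟩ := G.isGrid.exists_refinement (f := f) (p := p) z
    (erase_subset i S) fun l hl => by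
      have hli := ne_of_mem_erase hl
      simpa [hli] using hz l (mem_of_mem_erase hl) hli
  have hslab := hG'.abs_quasiVol_le_slabSum (f := f) (p := p) hiS
    (fun l hl hli => hz' l (mem_erase.mpr ⟨hli, hl⟩)) v
  have happ := hG'.append hiS (c := v) (by simpa using huv)
  simp only [update_self, update_idem] at hslab happ
  calc cellSum f S p G.m G.t + |quasiVol f S p (update z i u) (update hi i v)|
      ≤ cellSum f S p m' t' + slabSum f S p m' (insertLevel t' i (m' i) v) i (m' i) :=
        add_le_add hle hslab
    _ = cellSum f S p (update m' i (m' i + 1)) (insertLevel t' i (m' i) v) :=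
        (cellSum_insertLevel_last hiS v).symm
    _ ≤ vitaliVar f S p lo (update hi i v) := happ.cellSum_le_vitaliVar hbdd

lemma BddVitali.update_of_le (hbdd : BddVitali f S p lo hi) (hiS : i ∈ S) {c : ℝ}
    (hc : c ≤ hi i) : BddVitali f S p lo (update hi i c) := by
  refine ⟨vitaliVar f S p lo hi, ?_⟩
  rintro _ ⟨G, rfl⟩
  have happ := G.isGrid.append hiS (c := hi i) (by simpa using hc)
  rw [update_idem, update_eq_self] at happ
  rw [gridSum_eq_cellSum]
  calc cellSum f S p G.m G.t
      ≤ cellSum f S p (update G.m i (G.m i + 1)) (insertLevel G.t i (G.m i) (hi i)) := by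
        rw [cellSum_insertLevel_last hiS]
        exact le_add_of_nonneg_right (sum_nonneg fun _ _ => abs_nonneg _)
    _ ≤ vitaliVar f S p lo hi := happ.cellSum_le_vitaliVar hbdd

end SubBoxes

section Majorant

variable {f : (Fin d → ℝ) → ℝ}

lemma mem_powerset_erase_empty {S : Finset (Fin d)} {i : Fin d} (hiS : i ∈ S) :
    S ∈ (univ : Finset (Fin d)).powerset.erase ∅ :=
  mem_erase.mpr ⟨ne_empty_of_mem hiS, mem_powerset.mpr (subset_univ S)⟩

/-- `coordVar f i c` sums, over the faces through the anchor `1` that contain the direction `i`,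
the Vitali variation of `f` on the part `x i ≤ c` of the face; `c` is clamped to `[0, 1]` so
that this is monotone on all of `ℝ`. -/
def coordVar (f : (Fin d → ℝ) → ℝ) (i : Fin d) (c : ℝ) : ℝ :=
  ∑ T ∈ (univ.erase i).powerset, vitaliVar f (insert i T) 1 0 (update 1 i (min 1 (max 0 c)))

lemma vitaliVar_update_add_abs_quasiVol_le (hbv : BddHKVar f) {S : Finset (Fin d)} {i : Fin d}
    (hiS : i ∈ S) {u v : ℝ} (hu : 0 ≤ u) (huv : u ≤ v) (hv : v ≤ 1) {z : Fin d → ℝ}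
    (hz : z ∈ Set.Icc 0 1) :
    vitaliVar f S 1 0 (update 1 i u) + |quasiVol f S 1 (update z i u) (update 1 i v)|
      ≤ vitaliVar f S 1 0 (update 1 i v) := by
  refine vitaliVar_add_abs_quasiVol_le hiS huv
    (BddVitali.update_of_le (hbv S (mem_powerset_erase_empty hiS)) hiS hv) (fun l _ => ?_)
    fun l _ _ => ⟨hz.1 l, hz.2 l⟩
  by_cases hli : l = i
  · subst hli; simpa using hu
  · simp [hli]

lemma coordVar_monotone (hbv : BddHKVar f) (i : Fin d) : Monotone (coordVar f i) := by
  intro c c' hcc'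
  refine sum_le_sum fun T _ => le_of_add_le_of_nonneg_left
    (vitaliVar_update_add_abs_quasiVol_le hbv (mem_insert_self i T)
      (le_min zero_le_one (le_max_left _ _))
      (min_le_min le_rfl (max_le_max le_rfl hcc')) (min_le_left _ _) (z := 1)
      ⟨fun _ => zero_le_one, le_rfl⟩) (abs_nonneg _)

lemma coordVar_nonneg (i : Fin d) (c : ℝ) : 0 ≤ coordVar f i c :=
  sum_nonneg fun _ _ => Real.sSup_nonneg fun _ ⟨_, h⟩ => h ▸ sum_nonneg fun _ _ => abs_nonneg _

lemma coordVar_of_mem_Icc (i : Fin d) {c : ℝ} (hc : c ∈ Set.Icc (0 : ℝ) 1) :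
    coordVar f i c
      = ∑ T ∈ (univ.erase i).powerset, vitaliVar f (insert i T) 1 0 (update 1 i c) := by
  rw [coordVar, max_eq_right hc.1, min_eq_right hc.2]

theorem abs_sub_update_le_coordVar_sub (hbv : BddHKVar f) (i : Fin d) {z : Fin d → ℝ}
    (hz : z ∈ Set.Icc 0 1) {u v : ℝ} (hu : 0 ≤ u) (huv : u ≤ v) (hv : v ≤ 1) :
    |f (update z i u) - f (update z i v)| ≤ coordVar f i v - coordVar f i u := by
  set h : (Fin d → ℝ) → ℝ := fun w => f (update w i u) - f (update w i v)
  set a := update z i 1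
  -- Inclusion–exclusion for `h` over the faces not containing the direction `i` expresses `h a`
  -- through the quasi-volumes of `f` on the boxes `[update z i u, update 1 i v]` of the faces
  -- containing it.
  have hterm : ∀ T ∈ (univ.erase i).powerset, quasiVol h T 1 a 1
      = -quasiVol f (insert i T) 1 (update z i u) (update 1 i v) := by
    intro T hT
    have hiT : i ∉ T := fun hi => by simpa using mem_powerset.mp hT hi
    have hne : ∀ l ∈ T, l ≠ i := fun l hl h => hiT (h ▸ hl)
    rw [quasiVol_sub, quasiVol_comp_update f hiT, quasiVol_comp_update f hiT,
      quasiVol_insert f hiT]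
    simp only [update_self]
    have hbox : ∀ q, quasiVol f T q (update z i u) (update 1 i v) = quasiVol f T q a 1 :=
      fun q => quasiVol_congr f (fun _ _ => rfl) (fun l hl => by simp [a, hne l hl])
        (fun l hl => by simp [hne l hl])
    rw [hbox, hbox]
    ring
  have hsum := sum_powerset_neg_one_pow_mul_quasiVol h (univ.erase i) (a := a) (p := 1)
    fun l hl => by
      obtain rfl : l = i := by simpa using hl
      simp [a]
  have ha : h a = f (update z i u) - f (update z i v) := by simp [h, a]
  rw [← ha, ← hsum, coordVar_of_mem_Icc i ⟨hu.trans huv, hv⟩,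
    coordVar_of_mem_Icc i ⟨hu, huv.trans hv⟩, ← sum_sub_distrib]
  refine (abs_sum_le_sum_abs _ _).trans (sum_le_sum fun T hT => ?_)
  rw [hterm T hT, abs_mul, abs_pow, abs_neg, abs_one, one_pow, one_mul, abs_neg, le_sub_iff_add_le']
  exact vitaliVar_update_add_abs_quasiVol_le hbv (mem_insert_self i T) hu huv hv hz

theorem abs_sub_le_sum_coordVar (hbv : BddHKVar f) (U : Finset (Fin d)) {x y : Fin d → ℝ}
    (hx : x ∈ Set.Icc 0 1) (hy : y ∈ Set.Icc 0 1) (hxy : x ≤ y) (hU : ∀ l ∉ U, x l = y l) :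
    |f y - f x| ≤ ∑ l ∈ U, (coordVar f l (y l) - coordVar f l (x l)) := by
  induction U using Finset.induction_on generalizing y with
  | empty => simp [funext fun l => hU l (notMem_empty l)]
  | @insert i U hi ih =>
    set z := update y i (x i)
    have hz : z ∈ Set.Icc 0 1 := by
      refine ⟨fun l => ?_, fun l => ?_⟩ <;> by_cases hli : l = i
      · subst hli; simpa [z] using hx.1 l
      · simpa [z, hli] using hy.1 l
      · subst hli; simpa [z] using hx.2 l
      · simpa [z, hli] using hy.2 l
    have hxz : x ≤ z := by
      intro l; by_cases hli : l = i <;> simp [z, hli, hxy l]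
    have hzU : ∀ l ∉ U, x l = z l := by
      intro l hl
      by_cases hli : l = i
      · simp [z, hli]
      · simpa [z, hli] using hU l (by simp [hli, hl])
    have hstep : |f y - f z| ≤ coordVar f i (y i) - coordVar f i (x i) := by
      rw [abs_sub_comm]
      simpa [z] using abs_sub_update_le_coordVar_sub hbv i hy (hx.1 i) (hxy i) (hy.2 i)
    have hsum : ∑ l ∈ U, (coordVar f l (z l) - coordVar f l (x l))
        = ∑ l ∈ U, (coordVar f l (y l) - coordVar f l (x l)) :=
      sum_congr rfl fun l hl => by simp [z, ne_of_mem_of_not_mem hl hi]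
    rw [sum_insert hi, ← hsum]
    calc |f y - f x| ≤ |f y - f z| + |f z - f x| := abs_sub_le _ _ _
      _ ≤ _ := add_le_add hstep (ih hz hxz hzU)

lemma abs_le_abs_one_add_sum_coordVar (hbv : BddHKVar f) {y : Fin d → ℝ} (hy : y ∈ Set.Icc 0 1) :
    |f y| ≤ |f 1| + ∑ l, coordVar f l 1 := by
  have h := abs_sub_le_sum_coordVar hbv univ (y := 1) hy ⟨fun _ => zero_le_one, le_rfl⟩ hy.2
    (fun l hl => absurd (mem_univ l) hl)
  simp only [Pi.one_apply] at h
  have : ∑ l, (coordVar f l 1 - coordVar f l (y l)) ≤ ∑ l, coordVar f l 1 :=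
    sum_le_sum fun l _ => sub_le_self _ (coordVar_nonneg l _)
  linarith [abs_sub_abs_le_abs_sub (f y) (f 1), abs_sub_comm (f y) (f 1)]

end Majorant

section Levels

variable {L : Finset ℝ} {y z : ℝ} {j k : ℕ}

/-- The `k`-th smallest element of `L`, counting from `0`, with the junk value `1` beyond the
last one. -/
def level (L : Finset ℝ) (k : ℕ) : ℝ :=
  if h : k < #L then L.orderEmbOfFin rfl ⟨k, h⟩ else 1

/-- The index of the least element of `L` that is `≥ y`. -/
def levelIndex (L : Finset ℝ) (y : ℝ) : ℕ := #{z ∈ L | z < y}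

def roundUp (L : Finset ℝ) (y : ℝ) : ℝ := level L (levelIndex L y)

lemma level_of_lt (hk : k < #L) : level L k = L.orderEmbOfFin rfl ⟨k, hk⟩ := dif_pos hk

lemma level_mem (hk : k < #L) : level L k ∈ L := by
  rw [level_of_lt hk]; exact orderEmbOfFin_mem L rfl _

lemma level_lt_level (hjk : j < k) (hk : k < #L) : level L j < level L k := by
  rw [level_of_lt hk, level_of_lt (hjk.trans hk)]
  exact (L.orderEmbOfFin rfl).strictMono (Fin.mk_lt_mk.mpr hjk)

lemma level_le_level (hjk : j ≤ k) (hk : k < #L) : level L j ≤ level L k :=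
  hjk.eq_or_lt.elim (fun h => h ▸ le_rfl) fun h => (level_lt_level h hk).le

lemma exists_level_eq (hz : z ∈ L) : ∃ k < #L, level L k = z := by
  obtain ⟨⟨k, hk⟩, e⟩ : z ∈ Set.range (L.orderEmbOfFin rfl) := by
    rw [range_orderEmbOfFin]; exact hz
  exact ⟨k, hk, by rw [level_of_lt hk]; exact e⟩

lemma levelIndex_level (hk : k < #L) : levelIndex L (level L k) = k := by
  have : {z ∈ L | z < level L k}
      = (Iio (⟨k, hk⟩ : Fin #L)).map (L.orderEmbOfFin rfl).toEmbedding := by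
    ext z
    simp only [mem_filter, Finset.mem_map, mem_Iio, RelEmbedding.coe_toEmbedding, level_of_lt hk]
    constructor
    · rintro ⟨hz, hlt⟩
      obtain ⟨j, hj, rfl⟩ := exists_level_eq hz
      rw [level_of_lt hj] at hlt ⊢
      exact ⟨⟨j, hj⟩, (L.orderEmbOfFin rfl).lt_iff_lt.mp hlt, rfl⟩
    · rintro ⟨j, hj, rfl⟩
      exact ⟨orderEmbOfFin_mem L rfl j, (L.orderEmbOfFin rfl).lt_iff_lt.mpr hj⟩
  rw [levelIndex, this, card_map, Fin.card_Iio]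

lemma le_level_iff (hk : k < #L) : y ≤ level L k ↔ levelIndex L y ≤ k := by
  constructor
  · intro hy
    calc levelIndex L y ≤ levelIndex L (level L k) :=
          card_le_card fun z hz => by
            simp only [mem_filter] at hz ⊢; exact ⟨hz.1, hz.2.trans_le hy⟩
      _ = k := levelIndex_level hk
  · intro hy
    by_contra! hlt
    have hsub : insert (level L k) {z ∈ L | z < level L k} ⊆ {z ∈ L | z < y} := by
      intro z hz
      simp only [mem_insert, mem_filter] at hz ⊢
      rcases hz with rfl | hz
      · exact ⟨level_mem hk, hlt⟩
      · exact ⟨hz.1, hz.2.trans hlt⟩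
    have := card_le_card hsub
    rw [card_insert_of_notMem (by simp), ← levelIndex, ← levelIndex, levelIndex_level hk] at this
    omega

lemma roundUp_of_mem (hy : y ∈ L) : roundUp L y = y := by
  obtain ⟨k, hk, rfl⟩ := exists_level_eq hy
  rw [roundUp, levelIndex_level hk]

lemma levelIndex_lt_card (hz : z ∈ L) (hyz : y ≤ z) : levelIndex L y < #L :=
  card_lt_card (filter_ssubset.mpr ⟨z, hz, not_lt.mpr hyz⟩)

lemma le_roundUp (hz : z ∈ L) (hyz : y ≤ z) : y ≤ roundUp L y :=
  (le_level_iff (levelIndex_lt_card hz hyz)).mpr le_rfl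

lemma roundUp_le (hz : z ∈ L) (hyz : y ≤ z) : roundUp L y ≤ z := by
  obtain ⟨k, hk, rfl⟩ := exists_level_eq hz
  exact level_le_level ((le_level_iff hk).mp hyz) hk

lemma level_mem_Icc (hL : ∀ z ∈ L, z ∈ Set.Icc (0 : ℝ) 1) (k : ℕ) :
    level L k ∈ Set.Icc (0 : ℝ) 1 := by
  by_cases hk : k < #L
  · exact hL _ (level_mem hk)
  · simp [level, hk]

lemma isGrid_level (S : Finset (Fin d)) (h0 : 0 ∈ L) (h1 : 1 ∈ L)
    (hL : ∀ z ∈ L, z ∈ Set.Icc (0 : ℝ) 1) :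
    IsGrid S 0 1 (fun _ => #L - 1) (fun _ => level L) := by
  have hpos : 0 < #L := card_pos.mpr ⟨0, h0⟩
  refine ⟨fun _ _ j hj k hk hjk => level_le_level hjk (by simp at hk; omega), fun _ _ => ?_,
    fun _ _ => ?_⟩
  · rw [Pi.zero_apply, level_of_lt hpos, orderEmbOfFin_zero rfl hpos]
    exact le_antisymm (min'_le L 0 h0) (le_min' _ _ _ fun z hz => (hL z hz).1)
  · rw [Pi.one_apply, level_of_lt (by omega), orderEmbOfFin_last rfl hpos]
    exact le_antisymm (max'_le _ _ _ fun z hz => (hL z hz).2) (le_max' L 1 h1)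

end Levels

section StepApprox

variable {N : ℕ} {f : (Fin d → ℝ) → ℝ} {m : Fin d → ℕ} {t : Fin d → ℕ → ℝ}

def localDisc (N : ℕ) (x : Fin N → Fin d → ℝ) (μ : Measure (Fin d → ℝ)) (a : Fin d → ℝ) : ℝ :=
  (∑ n : Fin N, Set.indicator (Set.Icc 0 a) (fun _ => (1 : ℝ)) (x n)) / N
    - (μ (Set.Icc 0 a)).toReal

lemma abs_localDisc_le_starDisc (x : Fin N → Fin d → ℝ) (μ : Measure (Fin d → ℝ))
    [IsProbabilityMeasure μ] {a : Fin d → ℝ} (ha : a ∈ Set.Icc 0 1) :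
    |localDisc N x μ a| ≤ starDisc N x μ := by
  refine le_ciSup (f := fun b : Set.Icc (0 : Fin d → ℝ) 1 => |localDisc N x μ b|) ⟨1, ?_⟩ ⟨a, ha⟩
  rintro _ ⟨b, rfl⟩
  change |localDisc N x μ b| ≤ 1
  rw [localDisc]
  have hcount : ∑ n : Fin N, Set.indicator (Set.Icc 0 (b : Fin d → ℝ)) (fun _ => (1 : ℝ)) (x n)
      ≤ N := by
    calc _ ≤ ∑ _n : Fin N, (1 : ℝ) :=
          sum_le_sum fun n _ => Set.indicator_apply_le' (f := fun _ => (1 : ℝ)) (fun _ => le_rfl)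
            fun _ => zero_le_one
      _ = N := by simp
  have h₁ : 0 ≤ (∑ n : Fin N, Set.indicator (Set.Icc 0 (b : Fin d → ℝ)) (fun _ => (1 : ℝ)) (x n))
      / N :=
    div_nonneg (sum_nonneg fun n _ => Set.indicator_nonneg (fun _ _ => zero_le_one) (x n))
      (Nat.cast_nonneg N)
  have h₂ := div_le_one_of_le₀ hcount (Nat.cast_nonneg N)
  have h₃ : (μ (Set.Icc 0 (b : Fin d → ℝ))).toReal ≤ 1 := by
    simpa using ENNReal.toReal_mono ENNReal.one_ne_top
      (prob_le_one (s := Set.Icc 0 (b : Fin d → ℝ)))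
  have h₄ : 0 ≤ (μ (Set.Icc 0 (b : Fin d → ℝ))).toReal := ENNReal.toReal_nonneg
  exact abs_sub_le_iff.mpr ⟨by linarith, by linarith⟩

lemma starDisc_nonneg (x : Fin N → Fin d → ℝ) (μ : Measure (Fin d → ℝ)) [IsProbabilityMeasure μ] :
    0 ≤ starDisc N x μ :=
  (abs_nonneg _).trans (abs_localDisc_le_starDisc x μ ⟨le_rfl, zero_le_one⟩)

lemma localDisc_one (hN : 0 < N) {x : Fin N → Fin d → ℝ} (hx : ∀ n, x n ∈ Set.Icc 0 1)
    {μ : Measure (Fin d → ℝ)} (hμ : μ (Set.Icc 0 1) = 1) : localDisc N x μ 1 = 0 := by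
  simp [localDisc, Set.indicator_of_mem (hx _), hμ, hN.ne']

def cellCorner (S : Finset (Fin d)) (t : Fin d → ℕ → ℝ) (k : Fin d → ℕ) : Fin d → ℝ :=
  fun l => if l ∈ S then t l (k l) else 1

lemma IsGrid.cellCorner_mem_Icc {S : Finset (Fin d)} (hG : IsGrid S 0 1 m t) {k : Fin d → ℕ}
    (hk : k ∈ Fintype.piFinset (cellRanges S m)) : cellCorner S t k ∈ Set.Icc 0 1 := by
  refine ⟨fun l => ?_, fun l => ?_⟩ <;> by_cases hl : l ∈ S <;>
    simp only [cellCorner, hl, if_true, if_false, Pi.zero_apply, Pi.one_apply, zero_le_one, le_rfl]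
  all_goals
    have hkl := Fintype.mem_piFinset.mp hk l
    simp only [cellRanges, hl, if_true, mem_range] at hkl
    have := hG.mem_Icc hl hkl.le
  · exact this.1
  · exact this.2

/-- The inclusion–exclusion formula `f w = ∑ S, (-1) ^ #S * quasiVol f S 1 w 1` with each
quasi-volume replaced by the sum over the grid cells whose lower corner lies above `w`. -/
def stepApprox (f : (Fin d → ℝ) → ℝ) (m : Fin d → ℕ) (t : Fin d → ℕ → ℝ) (w : Fin d → ℝ) : ℝ :=
  ∑ S ∈ (univ : Finset (Fin d)).powerset, ∑ k ∈ Fintype.piFinset (cellRanges S m),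
    (-1) ^ #S * cellVol f S 1 t k * Set.indicator (Set.Icc 0 (cellCorner S t k)) (fun _ => 1) w

lemma measurable_stepApprox : Measurable (stepApprox f m t) :=
  Finset.measurable_sum _ fun _ _ => Finset.measurable_sum _ fun _ _ =>
    (measurable_const.indicator measurableSet_Icc).const_mul _

lemma average_sub_integral_stepApprox (x : Fin N → Fin d → ℝ) (μ : Measure (Fin d → ℝ))
    [IsProbabilityMeasure μ] :
    (∑ n : Fin N, stepApprox f m t (x n)) / N - ∫ y, stepApprox f m t y ∂μ
      = ∑ S ∈ (univ : Finset (Fin d)).powerset, ∑ k ∈ Fintype.piFinset (cellRanges S m),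
          (-1) ^ #S * cellVol f S 1 t k * localDisc N x μ (cellCorner S t k) := by
  have hint : ∀ S k, Integrable (fun y => (-1) ^ #S * cellVol f S 1 t k
      * Set.indicator (Set.Icc 0 (cellCorner S t k)) (fun _ => (1 : ℝ)) y) μ :=
    fun S k => ((integrable_const 1).indicator measurableSet_Icc).const_mul _
  unfold stepApprox
  rw [integral_finsetSum _ fun S _ => integrable_finsetSum _ fun k _ => hint S k,
    sum_comm, sum_div, ← sum_sub_distrib]
  refine sum_congr rfl fun S _ => ?_
  rw [integral_finsetSum _ fun k _ => hint S k, sum_comm, sum_div, ← sum_sub_distrib]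
  refine sum_congr rfl fun k _ => ?_
  rw [integral_const_mul, integral_indicator_const _ measurableSet_Icc, localDisc, ← mul_sum]
  simp only [measureReal_def, smul_eq_mul, mul_one]
  ring

theorem abs_average_sub_integral_stepApprox_le (hN : 0 < N) (hbv : BddHKVar f)
    (μ : Measure (Fin d → ℝ)) [IsProbabilityMeasure μ] (hμ : μ (Set.Icc 0 1) = 1)
    (x : Fin N → Fin d → ℝ) (hx : ∀ n, x n ∈ Set.Icc 0 1) (hG : IsGrid univ 0 1 m t) :
    |(∑ n : Fin N, stepApprox f m t (x n)) / N - ∫ y, stepApprox f m t y ∂μ|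
      ≤ hkVar f * starDisc N x μ := by
  have hempty : ∑ k ∈ Fintype.piFinset (cellRanges ∅ m),
      (-1) ^ #(∅ : Finset (Fin d)) * cellVol f ∅ 1 t k * localDisc N x μ (cellCorner ∅ t k)
        = 0 := by
    have : cellRanges ∅ m = fun _ => {0} := by funext l; simp [cellRanges]
    have hcorner : cellCorner ∅ t (fun _ => 0) = 1 := by funext l; simp [cellCorner]
    rw [this, Fintype.piFinset_singleton (fun _ => 0), sum_singleton, hcorner,
      localDisc_one hN hx hμ, mul_zero]
  rw [average_sub_integral_stepApprox, ← add_sum_erase _ _ (empty_mem_powerset _), hempty,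
    zero_add, hkVar, hkVarOn, sum_mul]
  refine (abs_sum_le_sum_abs _ _).trans (sum_le_sum fun S hS => ?_)
  have hGS := hG.subset (subset_univ S)
  calc |∑ k ∈ Fintype.piFinset (cellRanges S m),
        (-1) ^ #S * cellVol f S 1 t k * localDisc N x μ (cellCorner S t k)|
      ≤ ∑ k ∈ Fintype.piFinset (cellRanges S m), |cellVol f S 1 t k| * starDisc N x μ := by
        refine (abs_sum_le_sum_abs _ _).trans (sum_le_sum fun k hk => ?_)
        rw [abs_mul, abs_mul, abs_pow, abs_neg, abs_one, one_pow, one_mul]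
        exact mul_le_mul_of_nonneg_left
          (abs_localDisc_le_starDisc x μ (hGS.cellCorner_mem_Icc hk)) (abs_nonneg _)
    _ = cellSum f S 1 m t * starDisc N x μ := by rw [cellSum, sum_mul]
    _ ≤ vitaliVar f S 1 0 1 * starDisc N x μ :=
        mul_le_mul_of_nonneg_right (hGS.cellSum_le_vitaliVar (hbv S hS)) (starDisc_nonneg x μ)

theorem stepApprox_level_apply (f : (Fin d → ℝ) → ℝ) {L : Finset ℝ} (h0 : 0 ∈ L) (h1 : 1 ∈ L)
    (hL : ∀ z ∈ L, z ∈ Set.Icc (0 : ℝ) 1) {w : Fin d → ℝ} (hw : w ∈ Set.Icc 0 1) :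
    stepApprox f (fun _ => #L - 1) (fun _ => level L) w = f fun l => roundUp L (w l) := by
  classical
  have hG := isGrid_level (univ : Finset (Fin d)) h0 h1 hL
  have hidx : ∀ l, levelIndex L (w l) < #L := fun l => levelIndex_lt_card h1 (hw.2 l)
  rw [← sum_powerset_neg_one_pow_mul_quasiVol f univ (p := 1) (by simp)]
  refine sum_congr rfl fun S _ => ?_
  have hbox : quasiVol f S 1 (fun l => roundUp L (w l)) 1
      = quasiVol f S 1 (fun l => level L (levelIndex L (w l))) (fun l => level L (#L - 1)) :=
    quasiVol_congr f (fun _ _ => rfl) (fun _ _ => rfl) fun l hl => (hG.last l (mem_univ l)).symm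
  have hcells : {k ∈ Fintype.piFinset (cellRanges S fun _ => #L - 1) |
      w ∈ Set.Icc 0 (cellCorner S (fun _ => level L) k)}
      = Fintype.piFinset fun l => if l ∈ S then Ico (levelIndex L (w l)) (#L - 1) else {0} := by
    ext k
    simp only [mem_filter, Fintype.mem_piFinset, Set.mem_Icc, hw.1, true_and, Pi.le_def,
      cellRanges, cellCorner, ← forall_and]
    refine forall_congr' fun l => ?_
    by_cases hl : l ∈ S
    · simp only [hl, if_true, mem_range, mem_Ico]
      constructor
      · rintro ⟨hk, hwk⟩; exact ⟨(le_level_iff (by omega)).mp hwk, hk⟩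
      · rintro ⟨hwk, hk⟩; exact ⟨hk, (le_level_iff (by omega)).mpr hwk⟩
    · simpa [hl] using fun _ => hw.2 l
  rw [hbox, quasiVol_eq_sum_cellVol f S 1 _ fun l _ => Nat.le_sub_one_of_lt (hidx l), ← hcells,
    sum_filter, mul_sum]
  refine sum_congr rfl fun k _ => ?_
  rw [Set.indicator_apply]
  split_ifs <;> simp

end StepApprox

section Approximation

def approxLevels (e : ℕ → ℝ) (P : Finset ℝ) (n : ℕ) : Finset ℝ :=
  {y ∈ (range (2 ^ n + 1)).image (fun j : ℕ => (j : ℝ) / 2 ^ n) ∪ (range n).image e ∪ P |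
    y ∈ Set.Icc (0 : ℝ) 1}

variable {e : ℕ → ℝ} {P : Finset ℝ} {n : ℕ} {y : ℝ}

lemma approxLevels_subset_Icc : ∀ z ∈ approxLevels e P n, z ∈ Set.Icc (0 : ℝ) 1 :=
  fun _ hz => (mem_filter.mp hz).2

lemma mem_approxLevels_of_dyadic {j : ℕ} (hj : j ≤ 2 ^ n) :
    (j : ℝ) / 2 ^ n ∈ approxLevels e P n := by
  refine mem_filter.mpr ⟨by simp only [mem_union, mem_image, mem_range]; exact Or.inl (Or.inl
    ⟨j, by omega, rfl⟩), by positivity, div_le_one_of_le₀ (by exact_mod_cast hj) (by positivity)⟩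

lemma zero_mem_approxLevels : 0 ∈ approxLevels e P n := by
  simpa using mem_approxLevels_of_dyadic (e := e) (P := P) (n := n) (Nat.zero_le _)

lemma one_mem_approxLevels : 1 ∈ approxLevels e P n := by
  simpa using mem_approxLevels_of_dyadic (e := e) (P := P) (n := n) le_rfl

lemma mem_approxLevels_of_mem (hy : y ∈ P) (hy01 : y ∈ Set.Icc (0 : ℝ) 1) :
    y ∈ approxLevels e P n :=
  mem_filter.mpr ⟨mem_union_right _ hy, hy01⟩

lemma mem_approxLevels_of_lt {q : ℕ} (hq : q < n) (he : e q ∈ Set.Icc (0 : ℝ) 1) :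
    e q ∈ approxLevels e P n :=
  mem_filter.mpr ⟨mem_union_left _ (mem_union_right _ (mem_image_of_mem e (mem_range.mpr hq))), he⟩

lemma roundUp_approxLevels_le (hy : y ∈ Set.Icc (0 : ℝ) 1) :
    roundUp (approxLevels e P n) y ≤ y + (1 / 2) ^ n := by
  rw [one_div_pow]
  have hpow : (0 : ℝ) < 2 ^ n := by positivity
  set j := ⌈y * 2 ^ n⌉₊
  have hj : (j : ℝ) < y * 2 ^ n + 1 := Nat.ceil_lt_add_one (by nlinarith [hy.1])
  have hjn : j ≤ 2 ^ n := Nat.ceil_le.mpr (by push_cast; nlinarith [hy.2])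
  calc roundUp (approxLevels e P n) y ≤ j / 2 ^ n :=
        roundUp_le (mem_approxLevels_of_dyadic hjn) ((le_div_iff₀ hpow).mpr (Nat.le_ceil _))
    _ ≤ y + 1 / 2 ^ n := by
        rw [div_le_iff₀ hpow, add_mul, one_div_mul_cancel hpow.ne']; exact hj.le

lemma tendsto_roundUp_approxLevels (hy : y ∈ Set.Icc (0 : ℝ) 1) :
    Tendsto (fun n => roundUp (approxLevels e P n) y) atTop (𝓝 y) := by
  have hlim : Tendsto (fun n : ℕ => y + (1 / 2) ^ n) atTop (𝓝 y) := by
    simpa using tendsto_const_nhds.add (tendsto_pow_atTop_nhds_zero_of_lt_one (by norm_num)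
      (by norm_num : (1 / 2 : ℝ) < 1))
  exact tendsto_of_tendsto_of_tendsto_of_le_of_le tendsto_const_nhds hlim
    (fun n => le_roundUp one_mem_approxLevels hy.2) fun n => roundUp_approxLevels_le hy

/-- At continuity points of `g` the rounding error tends to `0`; at the points `e q` the rounding
is eventually exact. -/
lemma tendsto_comp_roundUp_approxLevels {g : ℝ → ℝ} (hg : {c | ¬ContinuousAt g c} ⊆ Set.range e)
    (hy : y ∈ Set.Icc (0 : ℝ) 1) :
    Tendsto (fun n => g (roundUp (approxLevels e P n) y)) atTop (𝓝 (g y)) := by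
  by_cases hcont : ContinuousAt g y
  · exact hcont.tendsto.comp (tendsto_roundUp_approxLevels hy)
  · obtain ⟨q, rfl⟩ := hg hcont
    refine tendsto_const_nhds.congr' (eventually_atTop.mpr ⟨q + 1, fun n hn => ?_⟩)
    dsimp only
    rw [roundUp_of_mem (mem_approxLevels_of_lt (by omega) hy)]

theorem tendsto_stepApprox_approxLevels {f : (Fin d → ℝ) → ℝ} (hbv : BddHKVar f)
    (he : ∀ i, {c | ¬ContinuousAt (coordVar f i) c} ⊆ Set.range e) {w : Fin d → ℝ}
    (hw : w ∈ Set.Icc 0 1) :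
    Tendsto (fun n => stepApprox f (fun _ => #(approxLevels e P n) - 1)
      (fun _ => level (approxLevels e P n)) w) atTop (𝓝 (f w)) := by
  simp only [stepApprox_level_apply f zero_mem_approxLevels one_mem_approxLevels
    approxLevels_subset_Icc hw]
  have hr : ∀ n, (fun l => roundUp (approxLevels e P n) (w l)) ∈ Set.Icc 0 1 := fun n =>
    ⟨fun l => (level_mem_Icc approxLevels_subset_Icc _).1,
      fun l => (level_mem_Icc approxLevels_subset_Icc _).2⟩
  have hsum : Tendsto (fun n => ∑ l, (coordVar f l (roundUp (approxLevels e P n) (w l))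
      - coordVar f l (w l))) atTop (𝓝 0) := by
    simpa using tendsto_finsetSum univ fun l _ =>
      (tendsto_comp_roundUp_approxLevels (he l) ⟨hw.1 l, hw.2 l⟩).sub_const (coordVar f l (w l))
  refine tendsto_iff_norm_sub_tendsto_zero.mpr (squeeze_zero (fun _ => norm_nonneg _)
    (fun n => ?_) hsum)
  exact abs_sub_le_sum_coordVar hbv univ hw (hr n)
    (fun l => le_roundUp one_mem_approxLevels (hw.2 l)) fun l hl => absurd (mem_univ l) hl

theorem tendsto_integral_stepApprox_approxLevels {f : (Fin d → ℝ) → ℝ} (hbv : BddHKVar f)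
    (he : ∀ i, {c | ¬ContinuousAt (coordVar f i) c} ⊆ Set.range e) (μ : Measure (Fin d → ℝ))
    [IsFiniteMeasure μ] (hμ : ∀ᵐ w ∂μ, w ∈ Set.Icc (0 : Fin d → ℝ) 1) :
    Tendsto (fun n => ∫ w, stepApprox f (fun _ => #(approxLevels e P n) - 1)
      (fun _ => level (approxLevels e P n)) w ∂μ) atTop (𝓝 (∫ w, f w ∂μ)) := by
  refine tendsto_integral_of_dominated_convergence (fun _ => |f 1| + ∑ l, coordVar f l 1)
    (fun _ => measurable_stepApprox.aestronglyMeasurable) (integrable_const _)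
    (fun n => hμ.mono fun w hw => ?_)
    (hμ.mono fun w hw => tendsto_stepApprox_approxLevels hbv he hw)
  rw [Real.norm_eq_abs, stepApprox_level_apply f zero_mem_approxLevels one_mem_approxLevels
    approxLevels_subset_Icc hw]
  exact abs_le_abs_one_add_sum_coordVar hbv ⟨fun l => (level_mem_Icc approxLevels_subset_Icc _).1,
    fun l => (level_mem_Icc approxLevels_subset_Icc _).2⟩

end Approximation

end KoksmaHlawka

open KoksmaHlawka Filter in
theorem stmt0_general {d N : ℕ} (hN : 0 < N) (f : (Fin d → ℝ) → ℝ)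
    (hbv : BddHKVar f) (μ : Measure (Fin d → ℝ)) [IsProbabilityMeasure μ]
    (hμ : μ (Set.Icc (0 : Fin d → ℝ) 1) = 1)
    (x : Fin N → Fin d → ℝ) (hx : ∀ n, x n ∈ Set.Icc (0 : Fin d → ℝ) 1) :
    |(∑ n : Fin N, f (x n)) / N - ∫ y, f y ∂μ| ≤ hkVar f * starDisc N x μ := by
  obtain ⟨e, he⟩ := Set.countable_iff_exists_subset_range.mp
    (Set.countable_iUnion fun i => (coordVar_monotone hbv i).countable_not_continuousAt)
  set P := univ.image fun q : Fin N × Fin d => x q.1 q.2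
  set F := fun n => stepApprox f (fun _ => #(approxLevels e P n) - 1)
    (fun _ => level (approxLevels e P n))
  have hFx : ∀ n q, F n (x q) = f (x q) := fun n q => by
    refine (stepApprox_level_apply f zero_mem_approxLevels one_mem_approxLevels
      approxLevels_subset_Icc (hx q)).trans (congrArg f (funext fun l => roundUp_of_mem ?_))
    exact mem_approxLevels_of_mem (mem_image_of_mem _ (mem_univ (q, l))) ⟨(hx q).1 l, (hx q).2 l⟩
  have hstep : ∀ n, |(∑ q : Fin N, F n (x q)) / N - ∫ y, F n y ∂μ| ≤ hkVar f * starDisc N x μ :=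
    fun n => abs_average_sub_integral_stepApprox_le hN hbv μ hμ x hx
      (isGrid_level univ zero_mem_approxLevels one_mem_approxLevels approxLevels_subset_Icc)
  simp only [hFx] at hstep
  have hcube : ∀ᵐ w ∂μ, w ∈ Set.Icc (0 : Fin d → ℝ) 1 :=
    mem_ae_iff.mpr ((prob_compl_eq_zero_iff measurableSet_Icc).mpr hμ)
  have hint := tendsto_integral_stepApprox_approxLevels (P := P) hbv
    (fun i => (Set.subset_iUnion _ i).trans he) μ hcube
  exact le_of_tendsto (tendsto_const_nhds.sub hint).abs (Eventually.of_forall hstep)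

/-- Generalized Koksma–Hlawka inequality for arbitrary normalized Borel measures. -/
theorem stmt0 {d N : ℕ} (hN : 0 < N) (f : (Fin d → ℝ) → ℝ) (hmeas : Measurable f)
    (hbv : BddHKVar f) (μ : Measure (Fin d → ℝ)) [IsProbabilityMeasure μ]
    (hμ : μ (Set.Icc (0 : Fin d → ℝ) 1) = 1)
    (x : Fin N → Fin d → ℝ) (hx : ∀ n, x n ∈ Set.Icc (0 : Fin d → ℝ) 1) :
    |(∑ n : Fin N, f (x n)) / N - ∫ y, f y ∂μ| ≤ hkVar f * starDisc N x μ :=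
  stmt0_general hN f hbv μ hμ x hx
end
end

section
/- Let ν be a finite signed Borel measure on [0,1]^d. Then there exists a unique right-continuous function f on [0,1]^d of bounded HK-variation such that f(x)=ν([0,x]) for all x∈[0,1]^d, and this f satisfies ‖ν‖ = V_HK0(f) + |f(0)|. Moreover, if f(x)=f(0)+f^+(x)−f^-(x) is the Jordan decomposition of f and ν=ν^+−ν^- is the Jordan decomposition of ν, then f^+(x)=ν^+([0,x]∖{0}) and f^-(x)=ν^-([0,x]∖{0}) for all x∈[0,1]^d. -/
open MeasureTheory Finset

noncomputable section

/-!
The function is `f x = ν [0, x]`. Writing `ν = ν⁺ - ν⁻` and `F± x = ν±[0, x]`, inclusion–exclusion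
shows that every quasi-volume of `F±` over a box `[a, b]` is the `ν±`-measure of the half-open box
`(a, b]` (with the inactive coordinates bounded by the anchor). Hence each grid sum of `f` is at
most `(ν⁺ + ν⁻)` of the face, and right-continuity is continuity of measures from above.

For the reverse inequality, `ν⁺ ⟂ ν⁻` and inner regularity give disjoint closed sets carrying
almost all of `ν⁺` and of `ν⁻`; they are at positive distance, so on a fine enough grid the cells
satisfy `∑ min (ν⁺ B) (ν⁻ B) < ε`. Since `|ν⁺ B - ν⁻ B| = ν⁺ B + ν⁻ B - 2 min (ν⁺ B) (ν⁻ B)`, the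
Vitali variation of `f` on each face anchored at `0` is `(ν⁺ + ν⁻)` of that face, and summing over
the faces gives `‖ν‖ = V_HK0(f) + |f 0|`.

For a Jordan decomposition `f = f 0 + f⁺ - f⁻`, the function `D = f⁺ - F⁺` equals `f⁻ - F⁻` up to
a constant, so its quasi-volume over a cell `B` is at least `-min (ν⁺ B) (ν⁻ B)`; the same fine
grids show that all quasi-volumes of `D` are nonnegative. The variation identity forces
`D 1 = D 0`, so the quasi-volumes of `D` over the faces of `[0, 1]`, then over those of `[0, x]`,
vanish: `D` is constant.
-/

open Function

lemma Fintype.sum_piFinset_eq_sum_sum_update {ι M : Type*} [DecidableEq ι] [Fintype ι]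
    [AddCommMonoid M] (F : ι → Finset ℕ) (j : ι) (g : (ι → ℕ) → M) :
    ∑ k ∈ Fintype.piFinset F, g k
      = ∑ l ∈ F j, ∑ k ∈ Fintype.piFinset (update F j {0}), g (update k j l) := by
  rw [← Finset.sum_product']
  refine Finset.sum_nbij' (fun k => (k j, update k j 0)) (fun lk => update lk.2 j lk.1)
    ?_ ?_ ?_ ?_ fun k _ => by simp
  · intro k hk
    simp only [Finset.mem_product, Fintype.mem_piFinset] at hk ⊢
    refine ⟨hk j, fun i => ?_⟩
    by_cases hi : i = j <;> simp_all
  · intro lk hlk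
    simp only [Finset.mem_product, Fintype.mem_piFinset] at hlk ⊢
    intro i
    by_cases hi : i = j
    · subst hi; simpa using hlk.1
    · simpa [hi] using hlk.2 i
  · intro k _
    simp
  · intro lk hlk
    simp only [Finset.mem_product, Fintype.mem_piFinset] at hlk
    have h0 : lk.2 j = 0 := by simpa using hlk.2 j
    ext <;> simp [← h0]

section QuasiVolume

variable {d : ℕ}

lemma quasiVol_empty (f : (Fin d → ℝ) → ℝ) (p a b : Fin d → ℝ) : quasiVol f ∅ p a b = f p := by
  simp [quasiVol]

lemma quasiVol_congr {f : (Fin d → ℝ) → ℝ} {S : Finset (Fin d)} {p p' a a' b b' : Fin d → ℝ}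
    (ha : ∀ i ∈ S, a i = a' i) (hb : ∀ i ∈ S, b i = b' i) (hp : ∀ i ∉ S, p i = p' i) :
    quasiVol f S p a b = quasiVol f S p' a' b' := by
  refine Finset.sum_congr rfl fun T _ => ?_
  congr 2
  ext i
  split_ifs with hi <;> simp_all

lemma quasiVol_congr_of_eqOn {f g : (Fin d → ℝ) → ℝ} (hfg : Set.EqOn f g (Set.Icc 0 1))
    (S : Finset (Fin d)) {p a b : Fin d → ℝ} (hp : p ∈ Set.Icc 0 1) (ha : a ∈ Set.Icc 0 1)
    (hb : b ∈ Set.Icc 0 1) : quasiVol f S p a b = quasiVol g S p a b := by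
  refine Finset.sum_congr rfl fun T _ => ?_
  rw [hfg]
  refine ⟨fun i => ?_, fun i => ?_⟩ <;> dsimp only <;> split_ifs
  exacts [ha.1 i, hb.1 i, hp.1 i, ha.2 i, hb.2 i, hp.2 i]

lemma quasiVol_sub (f g : (Fin d → ℝ) → ℝ) (S : Finset (Fin d)) (p a b : Fin d → ℝ) :
    quasiVol (f - g) S p a b = quasiVol f S p a b - quasiVol g S p a b := by
  simp only [quasiVol, Pi.sub_apply, mul_sub, Finset.sum_sub_distrib]

lemma quasiVol_const (c : ℝ) {S : Finset (Fin d)} (hS : S.Nonempty) (p a b : Fin d → ℝ) :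
    quasiVol (fun _ => c) S p a b = 0 := by
  have h := congrArg (Int.cast : ℤ → ℝ) (Finset.sum_powerset_neg_one_pow_card_of_nonempty hS)
  push_cast at h
  rw [quasiVol, ← Finset.sum_mul, h, zero_mul]

lemma quasiVol_insert (f : (Fin d → ℝ) → ℝ) {S : Finset (Fin d)} {j : Fin d} (hj : j ∉ S)
    (p a b : Fin d → ℝ) :
    quasiVol f (insert j S) p a b
      = quasiVol f S (update p j (b j)) a b - quasiVol f S (update p j (a j)) a b := by
  rw [quasiVol, Finset.sum_powerset_insert hj, quasiVol, quasiVol, sub_eq_add_neg,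
    ← Finset.sum_neg_distrib]
  congr 1 <;> refine Finset.sum_congr rfl fun T hT => ?_
  · have hjT : j ∉ T := fun h => hj (Finset.mem_powerset.1 hT h)
    congr 2
    ext i
    by_cases hi : i = j <;> simp_all
  · have hjT : j ∉ T := fun h => hj (Finset.mem_powerset.1 hT h)
    rw [Finset.card_insert_of_notMem hjT, pow_succ, mul_assoc, neg_one_mul, ← mul_neg]
    congr 3
    ext i
    by_cases hi : i = j <;> simp_all

lemma sum_powerset_quasiVol (f : (Fin d → ℝ) → ℝ) (S : Finset (Fin d)) {q a b : Fin d → ℝ}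
    (hq : ∀ i ∈ S, q i = a i) :
    ∑ T ∈ S.powerset, quasiVol f T q a b = f (S.piecewise b q) := by
  induction S using Finset.induction_on generalizing q with
  | empty => simp [quasiVol_empty]
  | @insert j S hj ih =>
    have hqj : update q j (a j) = q := by
      rw [← hq j (Finset.mem_insert_self j S), update_eq_self]
    have hins : ∀ T ∈ S.powerset, quasiVol f (insert j T) q a b
        = quasiVol f T (update q j (b j)) a b - quasiVol f T q a b := fun T hT => by
      rw [quasiVol_insert f (fun h => hj (Finset.mem_powerset.1 hT h)), hqj]
    rw [Finset.sum_powerset_insert hj, Finset.sum_congr rfl hins, Finset.sum_sub_distrib,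
      add_sub_cancel, ih fun i hi => ?_]
    · congr 1
      ext i
      by_cases hi : i = j <;> simp_all [Finset.piecewise]
    · rw [update_of_ne (ne_of_mem_of_not_mem hi hj)]
      exact hq i (Finset.mem_insert_of_mem hi)

lemma sum_quasiVol_zero (f : (Fin d → ℝ) → ℝ) (x : Fin d → ℝ) :
    ∑ S ∈ (Finset.univ : Finset (Fin d)).powerset.erase ∅, quasiVol f S 0 0 x = f x - f 0 := by
  have h := sum_powerset_quasiVol f Finset.univ (q := 0) (a := 0) (b := x) fun _ _ => rfl
  rw [← Finset.add_sum_erase _ _ (Finset.empty_mem_powerset _), quasiVol_empty,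
    Finset.piecewise_univ] at h
  linarith

lemma sum_piFinset_quasiVol (f : (Fin d → ℝ) → ℝ) (m : Fin d → ℕ) (t : Fin d → ℕ → ℝ)
    (S : Finset (Fin d)) (p : Fin d → ℝ) :
    ∑ k ∈ Fintype.piFinset (fun i => Finset.range (if i ∈ S then m i else 1)),
        quasiVol f S p (fun i => t i (k i)) (fun i => t i (k i + 1))
      = quasiVol f S p (fun i => t i 0) (fun i => t i (m i)) := by
  induction S using Finset.induction_on generalizing p with
  | empty => simp [quasiVol_empty]
  | @insert j S hj ih =>
    have hF : update (fun i => Finset.range (if i ∈ insert j S then m i else 1)) j {0}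
        = fun i => Finset.range (if i ∈ S then m i else 1) := by
      ext1 i; by_cases hi : i = j <;> simp_all
    have hslice : ∀ l k, quasiVol f (insert j S) p (fun i => t i (update k j l i))
          (fun i => t i (update k j l i + 1))
        = quasiVol f S (update p j (t j (l + 1))) (fun i => t i (k i)) (fun i => t i (k i + 1))
          - quasiVol f S (update p j (t j l)) (fun i => t i (k i)) (fun i => t i (k i + 1)) := by
      intro l k
      rw [quasiVol_insert f hj]
      simp only [update_self]
      congr 1 <;> refine quasiVol_congr (fun i hi => ?_) (fun i hi => ?_) fun _ _ => rfl <;>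
        rw [update_of_ne (ne_of_mem_of_not_mem hi hj)]
    rw [Fintype.sum_piFinset_eq_sum_sum_update _ j, hF, if_pos (Finset.mem_insert_self j S)]
    simp only [hslice, Finset.sum_sub_distrib, ih]
    rw [← Finset.sum_sub_distrib,
      Finset.sum_range_sub (fun l => quasiVol f S (update p j (t j l)) _ _), quasiVol_insert f hj]

end QuasiVolume

namespace Grid

variable {d : ℕ} {S : Finset (Fin d)} {lo hi : Fin d → ℝ}

def cells (G : Grid d S lo hi) : Finset (Fin d → ℕ) :=
  Fintype.piFinset fun i => Finset.range (if i ∈ S then G.m i else 1)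

def lower (G : Grid d S lo hi) (k : Fin d → ℕ) : Fin d → ℝ := fun i => G.t i (k i)

def upper (G : Grid d S lo hi) (k : Fin d → ℕ) : Fin d → ℝ := fun i => G.t i (k i + 1)

variable (G : Grid d S lo hi) {k : Fin d → ℕ}

lemma gridSum_eq_sum_cells (f : (Fin d → ℝ) → ℝ) (p : Fin d → ℝ) :
    gridSum f S p lo hi G = ∑ k ∈ G.cells, |quasiVol f S p (G.lower k) (G.upper k)| :=
  rfl

lemma lt_m_of_mem_cells (hk : k ∈ G.cells) {i : Fin d} (hiS : i ∈ S) : k i < G.m i := by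
  simpa [hiS] using Fintype.mem_piFinset.1 hk i

lemma lower_le_upper (hk : k ∈ G.cells) {i : Fin d} (hiS : i ∈ S) : G.lower k i ≤ G.upper k i :=
  G.mono i hiS _ _ (Nat.le_succ _) (G.lt_m_of_mem_cells hk hiS)

lemma upper_le_lower_of_lt {k' : Fin d → ℕ} (hk' : k' ∈ G.cells) {i : Fin d} (hiS : i ∈ S)
    (hkk' : k i < k' i) : G.upper k i ≤ G.lower k' i :=
  G.mono i hiS _ _ hkk' (G.lt_m_of_mem_cells hk' hiS).le

lemma lo_le_lower (hk : k ∈ G.cells) {i : Fin d} (hiS : i ∈ S) : lo i ≤ G.lower k i := by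
  rw [← G.first i hiS]
  exact G.mono i hiS _ _ (Nat.zero_le _) (G.lt_m_of_mem_cells hk hiS).le

lemma upper_le_hi (hk : k ∈ G.cells) {i : Fin d} (hiS : i ∈ S) : G.upper k i ≤ hi i := by
  rw [← G.last i hiS]
  exact G.mono i hiS _ _ (G.lt_m_of_mem_cells hk hiS) le_rfl

lemma lo_le_hi (G : Grid d S lo hi) {i : Fin d} (hiS : i ∈ S) : lo i ≤ hi i := by
  rw [← G.first i hiS, ← G.last i hiS]
  exact G.mono i hiS _ _ (Nat.zero_le _) le_rfl

lemma sum_quasiVol_cells (f : (Fin d → ℝ) → ℝ) (p : Fin d → ℝ) :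
    ∑ k ∈ G.cells, quasiVol f S p (G.lower k) (G.upper k) = quasiVol f S p lo hi :=
  (sum_piFinset_quasiVol f G.m G.t S p).trans <| quasiVol_congr G.first G.last fun _ _ => rfl

end Grid

section UnitCube

variable {d : ℕ}

abbrev UnitCube (d : ℕ) := Set.Icc (0 : Fin d → ℝ) 1

def lowerCorner (x : Fin d → ℝ) : Set (UnitCube d) := Subtype.val ⁻¹' Set.Icc 0 x

def faceBox (S : Finset (Fin d)) (p a b : Fin d → ℝ) : Set (UnitCube d) :=
  Subtype.val ⁻¹' Set.univ.pi fun i => if i ∈ S then Set.Ioc (a i) (b i) else Set.Iic (p i)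

lemma mem_faceBox {S : Finset (Fin d)} {p a b : Fin d → ℝ} {z : UnitCube d} :
    z ∈ faceBox S p a b ↔ ∀ i, if i ∈ S then z.1 i ∈ Set.Ioc (a i) (b i) else z.1 i ≤ p i := by
  simp only [faceBox, Set.mem_preimage, Set.mem_univ_pi]
  refine forall_congr' fun i => ?_
  split_ifs <;> rfl

lemma measurableSet_lowerCorner (x : Fin d → ℝ) : MeasurableSet (lowerCorner x) :=
  measurable_subtype_coe measurableSet_Icc

lemma measurableSet_faceBox (S : Finset (Fin d)) (p a b : Fin d → ℝ) :
    MeasurableSet (faceBox S p a b) :=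
  measurable_subtype_coe <| MeasurableSet.univ_pi fun i => by
    split_ifs
    exacts [measurableSet_Ioc, measurableSet_Iic]

lemma lowerCorner_one : lowerCorner (1 : Fin d → ℝ) = Set.univ :=
  Set.eq_univ_of_forall fun z => z.2

lemma lowerCorner_zero : lowerCorner (0 : Fin d → ℝ) = {⟨0, Set.left_mem_Icc.2 zero_le_one⟩} := by
  ext z
  simp only [lowerCorner, Set.Icc_self, Set.mem_preimage, Set.mem_singleton_iff]
  exact ⟨fun h => Subtype.ext h, fun h => congrArg Subtype.val h⟩

lemma faceBox_empty (p a b : Fin d → ℝ) : faceBox ∅ p a b = lowerCorner p := by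
  ext z
  simp [mem_faceBox, lowerCorner, z.2.1, Pi.le_def]

lemma faceBox_insert {S : Finset (Fin d)} {j : Fin d} (hj : j ∉ S) (p a b : Fin d → ℝ) :
    faceBox (insert j S) p a b
      = faceBox S (update p j (b j)) a b \ faceBox S (update p j (a j)) a b := by
  ext z
  simp only [Set.mem_sdiff, mem_faceBox]
  have hj' : ∀ i, i ≠ j → (i ∈ insert j S ↔ i ∈ S) := fun i hi => by simp [hi]
  constructor
  · intro h
    refine ⟨fun i => ?_, fun h' => ?_⟩
    · by_cases hi : i = j
      · subst hi; simpa [hj] using ((if_pos (Finset.mem_insert_self i S)).mp (h i)).2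
      · simpa [hi, hj' i hi] using h i
    · have h1 := h j
      have h2 := h' j
      simp only [Finset.mem_insert_self, if_true, hj, if_false, update_self] at h1 h2
      exact absurd h2 (not_le.2 h1.1)
  · rintro ⟨h, h'⟩ i
    by_cases hi : i = j
    · subst hi
      have hb : z.1 i ≤ b i := by simpa [hj] using h i
      refine if_pos (Finset.mem_insert_self i S) ▸ ⟨lt_of_not_ge fun ha => h' fun l => ?_, hb⟩
      by_cases hl : l = i
      · subst hl; simpa [hj] using ha
      · simpa [hl] using h l
    · simpa [hi, hj' i hi] using h i

lemma faceBox_subset_faceBox_of_le {S : Finset (Fin d)} {p p' a b : Fin d → ℝ} (hp : p ≤ p') :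
    faceBox S p a b ⊆ faceBox S p' a b := by
  intro z hz
  rw [mem_faceBox] at hz ⊢
  intro i
  have := hz i
  split_ifs at this ⊢
  exacts [this, this.trans (hp i)]

def distribFun (μ : Measure (UnitCube d)) (x : Fin d → ℝ) : ℝ := μ.real (lowerCorner x)

lemma quasiVol_distribFun (μ : Measure (UnitCube d)) [IsFiniteMeasure μ] {S : Finset (Fin d)}
    {a b : Fin d → ℝ} (hab : ∀ i ∈ S, a i ≤ b i) (p : Fin d → ℝ) :
    quasiVol (distribFun μ) S p a b = μ.real (faceBox S p a b) := by
  induction S using Finset.induction_on generalizing p with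
  | empty => rw [quasiVol_empty, faceBox_empty, distribFun]
  | @insert j S hj ih =>
    have hab' : ∀ i ∈ S, a i ≤ b i := fun i hi => hab i (Finset.mem_insert_of_mem hi)
    rw [quasiVol_insert _ hj, ih hab', ih hab', faceBox_insert hj,
      measureReal_sdiff (faceBox_subset_faceBox_of_le ?_) (measurableSet_faceBox _ _ _ _)]
    exact update_le_update_iff.2 ⟨hab j (Finset.mem_insert_self j S), fun _ _ => le_rfl⟩

lemma Grid.sum_measureReal_cells (μ : Measure (UnitCube d)) [IsFiniteMeasure μ]
    {S : Finset (Fin d)} {lo hi : Fin d → ℝ} (G : Grid d S lo hi) (p : Fin d → ℝ) :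
    ∑ k ∈ G.cells, μ.real (faceBox S p (G.lower k) (G.upper k)) = μ.real (faceBox S p lo hi) := by
  rw [← quasiVol_distribFun μ (fun i => G.lo_le_hi), ← G.sum_quasiVol_cells]
  exact Finset.sum_congr rfl fun k hk =>
    (quasiVol_distribFun μ (fun i => G.lower_le_upper hk) p).symm

lemma sum_measureReal_faceBox (μ : Measure (UnitCube d)) [IsFiniteMeasure μ] :
    ∑ S ∈ (Finset.univ : Finset (Fin d)).powerset.erase ∅, μ.real (faceBox S 0 0 1)
      = distribFun μ 1 - distribFun μ 0 := by
  rw [← sum_quasiVol_zero]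
  exact Finset.sum_congr rfl fun S _ => (quasiVol_distribFun μ (fun _ _ => zero_le_one) 0).symm

lemma Grid.pairwiseDisjoint_faceBox {S : Finset (Fin d)} {lo hi : Fin d → ℝ}
    (G : Grid d S lo hi) (p : Fin d → ℝ) :
    (G.cells : Set (Fin d → ℕ)).PairwiseDisjoint fun k => faceBox S p (G.lower k) (G.upper k) := by
  intro k hk k' hk' hne
  obtain ⟨i, hiS, hki⟩ : ∃ i ∈ S, k i ≠ k' i := by
    by_contra! h
    refine hne (funext fun i => if hiS : i ∈ S then h i hiS else ?_)
    have h1 := Fintype.mem_piFinset.1 hk i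
    have h2 := Fintype.mem_piFinset.1 hk' i
    simp only [hiS, if_false, Finset.range_one, Finset.mem_singleton] at h1 h2
    rw [h1, h2]
  refine Set.disjoint_left.2 fun z hz hz' => ?_
  have h := (mem_faceBox.1 hz i)
  have h' := (mem_faceBox.1 hz' i)
  simp only [hiS, if_true, Set.mem_Ioc] at h h'
  rcases hki.lt_or_gt with hlt | hlt
  · linarith [G.upper_le_lower_of_lt hk' hiS hlt]
  · linarith [G.upper_le_lower_of_lt hk hiS hlt]

lemma dist_le_of_mem_faceBox_zero {S : Finset (Fin d)} {a b : Fin d → ℝ} {r : ℝ} (hr : 0 ≤ r)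
    (hab : ∀ i ∈ S, b i - a i ≤ r) {z z' : UnitCube d} (hz : z ∈ faceBox S 0 a b)
    (hz' : z' ∈ faceBox S 0 a b) : dist z z' ≤ r := by
  rw [Subtype.dist_eq, dist_pi_le_iff hr]
  intro i
  have h := mem_faceBox.1 hz i
  have h' := mem_faceBox.1 hz' i
  split_ifs at h h' with hiS
  · rw [Real.dist_eq, abs_sub_le_iff]
    constructor <;> linarith [h.1, h.2, h'.1, h'.2, hab i hiS]
  · have h0 : z.1 i = 0 := le_antisymm h (z.2.1 i)
    have h0' : z'.1 i = 0 := le_antisymm h' (z'.2.1 i)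
    simpa [h0, h0'] using hr

lemma biInter_lowerCorner_update (x : Fin d → ℝ) (i : Fin d) :
    ⋂ y > x i, lowerCorner (update x i y) = lowerCorner x := by
  ext z
  simp only [Set.mem_iInter, lowerCorner, Set.mem_preimage, Set.mem_Icc, z.2.1, true_and]
  constructor
  · intro h j
    by_cases hj : j = i
    · subst hj
      exact le_of_forall_gt_imp_ge_of_dense fun y hy => by simpa using h y hy j
    · simpa [hj] using h (x i + 1) (lt_add_one _) j
  · intro h y hy j
    by_cases hj : j = i
    · subst hj; simpa using (h j).trans hy.le
    · simpa [hj] using h j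

open Filter Topology in
lemma tendsto_distribFun_update (μ : Measure (UnitCube d)) [IsFiniteMeasure μ]
    (x : Fin d → ℝ) (i : Fin d) :
    Tendsto (fun y => distribFun μ (update x i y)) (𝓝[Set.Icc (x i) 1] (x i))
      (𝓝 (distribFun μ x)) := by
  have hmono : ∀ y y', y ≤ y' → lowerCorner (update x i y) ⊆ lowerCorner (update x i y') :=
    fun y y' hyy' => Set.preimage_mono <| Set.Icc_subset_Icc le_rfl <|
      update_le_update_iff.2 ⟨hyy', fun _ _ => le_rfl⟩
  have hgt : Tendsto (fun y => distribFun μ (update x i y)) (𝓝[>] (x i)) (𝓝 (distribFun μ x)) := by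
    have := tendsto_measure_biInter_gt (μ := μ) (a := x i)
      (fun y _ => (measurableSet_lowerCorner _).nullMeasurableSet)
      (fun y y' _ hyy' => hmono y y' hyy') ⟨x i + 1, lt_add_one _, measure_ne_top _ _⟩
    rw [biInter_lowerCorner_update] at this
    exact (ENNReal.tendsto_toReal (measure_ne_top _ _)).comp this
  have hsub : Set.Icc (x i) 1 ⊆ insert (x i) (Set.Ioi (x i)) := fun y hy =>
    (eq_or_lt_of_le hy.1).elim (fun h => Or.inl h.symm) Or.inr
  refine Tendsto.mono_left ?_ (nhdsWithin_mono _ hsub)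
  rw [nhdsWithin_insert]
  refine tendsto_sup.2 ⟨?_, hgt⟩
  simpa using tendsto_pure_nhds (fun y => distribFun μ (update x i y)) (x i)

end UnitCube

section UniformGrid

variable {d : ℕ}

def uniformGrid (S : Finset (Fin d)) {a b : Fin d → ℝ} (hab : a ≤ b) (N : ℕ) : Grid d S a b where
  m _ := N + 1
  t i j := a i + j * ((b i - a i) / (N + 1))
  mono i _ j k hjk _ := by
    have : 0 ≤ (b i - a i) / (N + 1) := div_nonneg (sub_nonneg.2 (hab i)) (by positivity)
    gcongr
  first _ _ := by simp
  last i _ := by field_simp; push_cast; ring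

variable {S : Finset (Fin d)} {a b : Fin d → ℝ} (hab : a ≤ b) (N : ℕ) {k : Fin d → ℕ}

lemma uniformGrid_upper_sub_lower (k : Fin d → ℕ) (i : Fin d) :
    (uniformGrid S hab N).upper k i - (uniformGrid S hab N).lower k i = (b i - a i) / (N + 1) := by
  simp only [Grid.upper, Grid.lower, uniformGrid]
  push_cast
  ring

lemma uniformGrid_lower_le_upper (k : Fin d → ℕ) :
    (uniformGrid S hab N).lower k ≤ (uniformGrid S hab N).upper k := fun i =>
  sub_nonneg.1 <| (uniformGrid_upper_sub_lower hab N k i).symm ▸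
    div_nonneg (sub_nonneg.2 (hab i)) (by positivity)

lemma uniformGrid_t_mem (i : Fin d) {j : ℕ} (hj : j ≤ N + 1) :
    (uniformGrid S hab N).t i j ∈ Set.Icc (a i) (b i) := by
  have hstep : 0 ≤ (b i - a i) / (N + 1) := div_nonneg (sub_nonneg.2 (hab i)) (by positivity)
  refine ⟨le_add_of_nonneg_right (mul_nonneg j.cast_nonneg hstep), ?_⟩
  calc a i + j * ((b i - a i) / (N + 1)) ≤ a i + (N + 1) * ((b i - a i) / (N + 1)) := by
        gcongr; exact_mod_cast hj
    _ = b i := by field_simp; ring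

lemma uniformGrid_lt_of_mem_cells (hk : k ∈ (uniformGrid S hab N).cells) (i : Fin d) :
    k i < N + 1 := by
  have := Fintype.mem_piFinset.1 hk i
  split_ifs at this <;> simp [uniformGrid] at this <;> omega

lemma uniformGrid_lower_mem (hk : k ∈ (uniformGrid S hab N).cells) :
    (uniformGrid S hab N).lower k ∈ Set.Icc a b :=
  ⟨fun i => (uniformGrid_t_mem hab N i (uniformGrid_lt_of_mem_cells hab N hk i).le).1,
    fun i => (uniformGrid_t_mem hab N i (uniformGrid_lt_of_mem_cells hab N hk i).le).2⟩

lemma uniformGrid_upper_mem (hk : k ∈ (uniformGrid S hab N).cells) :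
    (uniformGrid S hab N).upper k ∈ Set.Icc a b :=
  ⟨fun i => (uniformGrid_t_mem hab N i (uniformGrid_lt_of_mem_cells hab N hk i)).1,
    fun i => (uniformGrid_t_mem hab N i (uniformGrid_lt_of_mem_cells hab N hk i)).2⟩

end UniformGrid

namespace MeasureTheory

lemma Measure.MutuallySingular.measure_singleton_eq_zero_or {α : Type*} [MeasurableSpace α]
    {μ ν : Measure α} (h : μ ⟂ₘ ν) (x : α) : μ {x} = 0 ∨ ν {x} = 0 := by
  by_cases hx : x ∈ h.nullSet
  · exact Or.inl (measure_mono_null (Set.singleton_subset_iff.2 hx) h.measure_nullSet)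
  · exact Or.inr (measure_mono_null (Set.singleton_subset_iff.2 hx) h.measure_compl_nullSet)

variable {α : Type*} [MetricSpace α] [MeasurableSpace α] [BorelSpace α]

lemma exists_isClosed_disjoint_measureReal_compl_lt (μ : Measure α) [IsFiniteMeasure μ]
    {U : Set α} (hU : MeasurableSet U) (hμU : μ U = 0) {ε : ℝ} (hε : 0 < ε) :
    ∃ C, IsClosed C ∧ Disjoint C U ∧ μ.real Cᶜ < ε := by
  obtain ⟨C, hCU, hC, hlt⟩ :=
    hU.compl.exists_isClosed_sdiff_lt (μ := μ) (measure_ne_top _ _) (ENNReal.ofReal_pos.2 hε).ne'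
  refine ⟨C, hC, Set.subset_compl_iff_disjoint_right.1 hCU, ?_⟩
  have hsub : Cᶜ ⊆ (Uᶜ \ C) ∪ U := fun x hx => by
    by_cases hxU : x ∈ U
    exacts [Or.inr hxU, Or.inl ⟨hxU, hx⟩]
  have : μ Cᶜ < ENNReal.ofReal ε :=
    calc μ Cᶜ ≤ μ (Uᶜ \ C) + μ U := (measure_mono hsub).trans (measure_union_le _ _)
      _ < ENNReal.ofReal ε := by rwa [hμU, add_zero]
  rw [measureReal_def, ← ENNReal.toReal_ofReal hε.le]
  exact (ENNReal.toReal_lt_toReal (measure_ne_top _ _) ENNReal.ofReal_ne_top).2 this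

lemma Measure.MutuallySingular.exists_sum_min_measureReal_le [CompactSpace α] {ι : Type*}
    {μ ν : Measure α} [IsFiniteMeasure μ] [IsFiniteMeasure ν] (h : μ ⟂ₘ ν) {ε : ℝ} (hε : 0 < ε) :
    ∃ δ > 0, ∀ (s : Finset ι) (B : ι → Set α), (∀ i ∈ s, MeasurableSet (B i)) →
      (s : Set ι).PairwiseDisjoint B → (∀ i ∈ s, ∀ x ∈ B i, ∀ y ∈ B i, dist x y < δ) →
      ∑ i ∈ s, min (μ.real (B i)) (ν.real (B i)) ≤ ε := by
  obtain ⟨C₁, hC₁, hC₁U, hμ⟩ := exists_isClosed_disjoint_measureReal_compl_lt μ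
    h.measurableSet_nullSet h.measure_nullSet (half_pos hε)
  obtain ⟨C₂, hC₂, hC₂U, hν⟩ := exists_isClosed_disjoint_measureReal_compl_lt ν
    h.measurableSet_nullSet.compl h.measure_compl_nullSet (half_pos hε)
  have hC : Disjoint C₁ C₂ := Set.disjoint_left.2 fun x h₁ h₂ =>
    Set.disjoint_left.1 hC₂U h₂ (Set.disjoint_left.1 hC₁U h₁)
  obtain ⟨r, hr, hsep⟩ := Metric.exists_pos_forall_lt_edist hC₁.isCompact hC₂ hC
  refine ⟨r, hr, fun s B hB hBdisj hdiam => ?_⟩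
  have hmin : ∀ i ∈ s, min (μ.real (B i)) (ν.real (B i))
      ≤ (μ.restrict C₁ᶜ).real (B i) + (ν.restrict C₂ᶜ).real (B i) := by
    intro i hi
    rw [measureReal_restrict_apply (hB i hi), measureReal_restrict_apply (hB i hi)]
    by_cases h₁ : Disjoint (B i) C₁
    · rw [Set.inter_eq_left.2 (Set.subset_compl_iff_disjoint_right.2 h₁)]
      exact (min_le_left _ _).trans (le_add_of_nonneg_right measureReal_nonneg)
    · have h₂ : Disjoint (B i) C₂ := by
        refine Set.disjoint_left.2 fun y hy hyC => h₁ (Set.disjoint_left.2 fun x hx hxC => ?_)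
        have := hsep x hxC y hyC
        rw [edist_dist, ← ENNReal.ofReal_coe_nnreal, ENNReal.ofReal_lt_ofReal_iff_of_nonneg
          r.coe_nonneg] at this
        exact (hdiam i hi x hx y hy).not_gt this
      rw [Set.inter_eq_left.2 (Set.subset_compl_iff_disjoint_right.2 h₂)]
      exact (min_le_right _ _).trans (le_add_of_nonneg_left measureReal_nonneg)
  calc ∑ i ∈ s, min (μ.real (B i)) (ν.real (B i))
      ≤ ∑ i ∈ s, (μ.restrict C₁ᶜ).real (B i) + ∑ i ∈ s, (ν.restrict C₂ᶜ).real (B i) := by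
        rw [← Finset.sum_add_distrib]; exact Finset.sum_le_sum hmin
    _ ≤ (μ.restrict C₁ᶜ).real Set.univ + (ν.restrict C₂ᶜ).real Set.univ :=
        add_le_add (sum_measureReal_le_measureReal_univ hB hBdisj)
          (sum_measureReal_le_measureReal_univ hB hBdisj)
    _ ≤ ε := by
        rw [measureReal_restrict_apply_univ, measureReal_restrict_apply_univ]
        linarith

end MeasureTheory

section FineGrids

variable {d : ℕ}

lemma exists_uniformGrid_sum_min_le {μ ν : Measure (UnitCube d)} [IsFiniteMeasure μ]
    [IsFiniteMeasure ν] (h : μ ⟂ₘ ν) (S : Finset (Fin d)) {a b : Fin d → ℝ} (ha : 0 ≤ a)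
    (hab : a ≤ b) (hb : b ≤ 1) {ε : ℝ} (hε : 0 < ε) :
    ∃ N, ∑ k ∈ (uniformGrid S hab N).cells,
      min (μ.real (faceBox S 0 ((uniformGrid S hab N).lower k) ((uniformGrid S hab N).upper k)))
        (ν.real (faceBox S 0 ((uniformGrid S hab N).lower k) ((uniformGrid S hab N).upper k)))
      ≤ ε := by
  obtain ⟨δ, hδ, hsmall⟩ := h.exists_sum_min_measureReal_le (ι := Fin d → ℕ) hε
  obtain ⟨N, hN⟩ := exists_nat_one_div_lt hδ
  refine ⟨N, hsmall _ _ (fun k _ => measurableSet_faceBox _ _ _ _)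
    ((uniformGrid S hab N).pairwiseDisjoint_faceBox 0) fun k _ z hz z' hz' => ?_⟩
  refine (dist_le_of_mem_faceBox_zero (r := 1 / (N + 1)) (by positivity) (fun i _ => ?_) hz
    hz').trans_lt hN
  rw [uniformGrid_upper_sub_lower]
  gcongr
  linarith [show 0 ≤ a i from ha i, show b i ≤ 1 from hb i]

lemma quasiVol_nonneg_of_neg_min_le {g : (Fin d → ℝ) → ℝ} {μ ν : Measure (UnitCube d)}
    [IsFiniteMeasure μ] [IsFiniteMeasure ν] (h : μ ⟂ₘ ν) {S : Finset (Fin d)}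
    (hcell : ∀ a b, a ∈ Set.Icc 0 1 → b ∈ Set.Icc 0 1 → a ≤ b →
      -min (μ.real (faceBox S 0 a b)) (ν.real (faceBox S 0 a b)) ≤ quasiVol g S 0 a b)
    {a b : Fin d → ℝ} (ha : a ∈ Set.Icc 0 1) (hb : b ∈ Set.Icc 0 1) (hab : a ≤ b) :
    0 ≤ quasiVol g S 0 a b := by
  refine le_of_forall_pos_le_add fun ε hε => ?_
  obtain ⟨N, hN⟩ := exists_uniformGrid_sum_min_le h S ha.1 hab hb.2 hε
  set G := uniformGrid S hab N
  have hsub : Set.Icc a b ⊆ Set.Icc 0 1 := Set.Icc_subset_Icc ha.1 hb.2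
  have hcells : ∀ k ∈ G.cells, -min (μ.real (faceBox S 0 (G.lower k) (G.upper k)))
      (ν.real (faceBox S 0 (G.lower k) (G.upper k))) ≤ quasiVol g S 0 (G.lower k) (G.upper k) :=
    fun k hk => hcell _ _ (hsub (uniformGrid_lower_mem hab N hk))
      (hsub (uniformGrid_upper_mem hab N hk)) (uniformGrid_lower_le_upper hab N k)
  have := Finset.sum_le_sum hcells
  rw [Finset.sum_neg_distrib, G.sum_quasiVol_cells] at this
  linarith

def cornerGrid (S : Finset (Fin d)) {x : Fin d → ℝ} (hx : x ∈ Set.Icc 0 1) : Grid d S 0 1 where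
  m _ := 2
  t i j := if j = 0 then 0 else if j = 1 then x i else 1
  mono i _ j k hjk _ := by
    have h0 : (0 : ℝ) ≤ x i := hx.1 i
    have h1 : x i ≤ 1 := hx.2 i
    split_ifs <;> first | omega | linarith
  first _ _ := rfl
  last _ _ := rfl

lemma cornerGrid_t_mem (S : Finset (Fin d)) {x : Fin d → ℝ} (hx : x ∈ Set.Icc 0 1) (i : Fin d)
    (j : ℕ) : (cornerGrid S hx).t i j ∈ Set.Icc 0 1 := by
  simp only [cornerGrid]
  split_ifs
  exacts [⟨le_rfl, zero_le_one⟩, ⟨hx.1 i, hx.2 i⟩, ⟨zero_le_one, le_rfl⟩]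

lemma cornerGrid_t_le_succ (S : Finset (Fin d)) {x : Fin d → ℝ} (hx : x ∈ Set.Icc 0 1)
    (i : Fin d) (j : ℕ) : (cornerGrid S hx).t i j ≤ (cornerGrid S hx).t i (j + 1) := by
  rcases j with _ | _ | j
  · simpa [cornerGrid] using hx.1 i
  · simpa [cornerGrid] using hx.2 i
  · simp [cornerGrid]

lemma quasiVol_zero_le_quasiVol_zero_one {g : (Fin d → ℝ) → ℝ} {S : Finset (Fin d)}
    (hg : ∀ a b, a ∈ Set.Icc 0 1 → b ∈ Set.Icc 0 1 → a ≤ b → 0 ≤ quasiVol g S 0 a b)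
    {x : Fin d → ℝ} (hx : x ∈ Set.Icc 0 1) : quasiVol g S 0 0 x ≤ quasiVol g S 0 0 1 := by
  set G := cornerGrid S hx
  have hmem : ∀ k i, G.lower k i ∈ Set.Icc 0 1 ∧ G.upper k i ∈ Set.Icc 0 1 := fun k i =>
    ⟨cornerGrid_t_mem S hx i _, cornerGrid_t_mem S hx i _⟩
  calc quasiVol g S 0 0 x = quasiVol g S 0 (G.lower 0) (G.upper 0) := rfl
    _ ≤ ∑ k ∈ G.cells, quasiVol g S 0 (G.lower k) (G.upper k) := by
        refine Finset.single_le_sum (f := fun k => quasiVol g S 0 (G.lower k) (G.upper k))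
          (fun k _ => hg _ _ ⟨fun i => (hmem k i).1.1, fun i => (hmem k i).1.2⟩
            ⟨fun i => (hmem k i).2.1, fun i => (hmem k i).2.2⟩
            fun i => cornerGrid_t_le_succ S hx i _)
          (Fintype.mem_piFinset.2 fun i => by split_ifs <;> simp [G, cornerGrid])
    _ = quasiVol g S 0 0 1 := G.sum_quasiVol_cells g 0

end FineGrids

namespace CompletelyMonotone

variable {d : ℕ} {h : (Fin d → ℝ) → ℝ}

lemma quasiVol_nonneg (hcm : CompletelyMonotone h) {S : Finset (Fin d)} (hS : S.Nonempty)
    {a b : Fin d → ℝ} (ha : ∀ i ∈ S, 0 ≤ a i) (hab : ∀ i ∈ S, a i ≤ b i) (hb : ∀ i ∈ S, b i ≤ 1) :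
    0 ≤ quasiVol h S 0 a b := by
  have hpw : ∀ i, S.piecewise a 0 i ∈ Set.Icc 0 (S.piecewise b 0 i) ∧ S.piecewise b 0 i ≤ 1 :=
    fun i => by
      by_cases hi : i ∈ S
      · simpa [hi] using ⟨⟨ha i hi, hab i hi⟩, hb i hi⟩
      · simp [hi]
  rw [quasiVol_congr (a' := S.piecewise a 0) (b' := S.piecewise b 0) (fun i hi => by simp [hi])
    (fun i hi => by simp [hi]) fun _ _ => rfl]
  exact hcm S hS 0 (fun _ _ => Or.inl rfl) _ _
    ⟨fun i => (hpw i).1.1, fun i => (hpw i).1.2.trans (hpw i).2⟩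
    ⟨fun i => (hpw i).1.1.trans (hpw i).1.2, fun i => (hpw i).2⟩ fun i => (hpw i).1.2

lemma vitaliVar_eq (hcm : CompletelyMonotone h) {S : Finset (Fin d)} (hS : S.Nonempty) :
    vitaliVar h S 0 0 1 = quasiVol h S 0 0 1 := by
  have hG : ∀ G : Grid d S 0 1, gridSum h S 0 0 1 G = quasiVol h S 0 0 1 := fun G => by
    rw [G.gridSum_eq_sum_cells, ← G.sum_quasiVol_cells]
    refine Finset.sum_congr rfl fun k hk => abs_of_nonneg <| hcm.quasiVol_nonneg hS
      (fun i hi => G.lo_le_lower hk hi) (fun i hi => G.lower_le_upper hk hi)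
      (fun i hi => G.upper_le_hi hk hi)
  have : Nonempty (Grid d S 0 1) := ⟨uniformGrid S zero_le_one 0⟩
  rw [vitaliVar, Set.range_eq_singleton_iff.2 hG, csSup_singleton]

lemma hkVar0_eq (hcm : CompletelyMonotone h) : hkVar0 h = h 1 - h 0 := by
  rw [hkVar0, hkVarOn, ← sum_quasiVol_zero]
  exact Finset.sum_congr rfl fun S hS =>
    hcm.vitaliVar_eq (Finset.nonempty_iff_ne_empty.2 (Finset.ne_of_mem_erase hS))

end CompletelyMonotone

namespace MeasureTheory.SignedMeasure

variable {d : ℕ} (ν : SignedMeasure (UnitCube d))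

lemma apply_lowerCorner_eq_distribFun_sub :
    (fun x => ν (lowerCorner x))
      = distribFun ν.toJordanDecomposition.posPart - distribFun ν.toJordanDecomposition.negPart :=
  funext fun x => ν.apply_eq_posPart_real_sub_negPart_real (measurableSet_lowerCorner x)

lemma rightCts_lowerCorner : RightCts fun x => ν (lowerCorner x) := by
  intro x _ i
  rw [apply_lowerCorner_eq_distribFun_sub]
  exact (tendsto_distribFun_update _ x i).sub (tendsto_distribFun_update _ x i)

lemma quasiVol_lowerCorner {S : Finset (Fin d)} {a b : Fin d → ℝ} (hab : ∀ i ∈ S, a i ≤ b i)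
    (p : Fin d → ℝ) :
    quasiVol (fun x => ν (lowerCorner x)) S p a b
      = ν.toJordanDecomposition.posPart.real (faceBox S p a b)
        - ν.toJordanDecomposition.negPart.real (faceBox S p a b) := by
  rw [apply_lowerCorner_eq_distribFun_sub, quasiVol_sub, quasiVol_distribFun _ hab,
    quasiVol_distribFun _ hab]

lemma gridSum_lowerCorner_le {S : Finset (Fin d)} {p lo hi : Fin d → ℝ} (G : Grid d S lo hi) :
    gridSum (fun x => ν (lowerCorner x)) S p lo hi G
      ≤ ν.toJordanDecomposition.posPart.real (faceBox S p lo hi)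
        + ν.toJordanDecomposition.negPart.real (faceBox S p lo hi) := by
  rw [G.gridSum_eq_sum_cells, ← G.sum_measureReal_cells ν.toJordanDecomposition.posPart,
    ← G.sum_measureReal_cells ν.toJordanDecomposition.negPart, ← Finset.sum_add_distrib]
  refine Finset.sum_le_sum fun k hk => ?_
  rw [quasiVol_lowerCorner ν fun i => G.lower_le_upper hk]
  calc _ ≤ |ν.toJordanDecomposition.posPart.real _| + |ν.toJordanDecomposition.negPart.real _| :=
        abs_sub _ _
    _ = _ := by rw [abs_of_nonneg measureReal_nonneg, abs_of_nonneg measureReal_nonneg]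

lemma bddHKVar_lowerCorner : BddHKVar fun x => ν (lowerCorner x) :=
  fun _ _ => ⟨_, Set.forall_mem_range.2 fun G => ν.gridSum_lowerCorner_le G⟩

lemma vitaliVar_lowerCorner (S : Finset (Fin d)) :
    vitaliVar (fun x => ν (lowerCorner x)) S 0 0 1
      = ν.toJordanDecomposition.posPart.real (faceBox S 0 0 1)
        + ν.toJordanDecomposition.negPart.real (faceBox S 0 0 1) := by
  have hbdd : BddAbove (Set.range (gridSum (fun x => ν (lowerCorner x)) S 0 0 1)) :=
    ⟨_, Set.forall_mem_range.2 fun G => ν.gridSum_lowerCorner_le G⟩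
  refine le_antisymm (csSup_le ⟨_, Set.mem_range_self (uniformGrid S zero_le_one 0)⟩
    (Set.forall_mem_range.2 fun G => ν.gridSum_lowerCorner_le G)) ?_
  refine le_of_forall_pos_le_add fun ε hε => ?_
  obtain ⟨N, hN⟩ := exists_uniformGrid_sum_min_le ν.toJordanDecomposition.mutuallySingular S
    le_rfl zero_le_one le_rfl (half_pos hε)
  set μp := ν.toJordanDecomposition.posPart
  set μm := ν.toJordanDecomposition.negPart
  set G := uniformGrid S (zero_le_one : (0 : Fin d → ℝ) ≤ 1) N
  have hcell : ∀ k ∈ G.cells, |quasiVol (fun x => ν (lowerCorner x)) S 0 (G.lower k) (G.upper k)|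
      = μp.real (faceBox S 0 (G.lower k) (G.upper k))
        + μm.real (faceBox S 0 (G.lower k) (G.upper k))
        - 2 * min (μp.real (faceBox S 0 (G.lower k) (G.upper k)))
          (μm.real (faceBox S 0 (G.lower k) (G.upper k))) := fun k hk => by
    rw [quasiVol_lowerCorner ν fun i => G.lower_le_upper hk, ← max_sub_min_eq_abs', two_mul,
      ← min_add_max]
    ring
  have hG : μp.real (faceBox S 0 0 1) + μm.real (faceBox S 0 0 1) - ε
      ≤ gridSum (fun x => ν (lowerCorner x)) S 0 0 1 G := by
    rw [G.gridSum_eq_sum_cells, Finset.sum_congr rfl hcell, Finset.sum_sub_distrib,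
      Finset.sum_add_distrib, G.sum_measureReal_cells μp, G.sum_measureReal_cells μm,
      ← Finset.mul_sum]
    linarith
  have hle : gridSum (fun x => ν (lowerCorner x)) S 0 0 1 G
      ≤ vitaliVar (fun x => ν (lowerCorner x)) S 0 0 1 :=
    le_csSup hbdd (Set.mem_range_self G)
  linarith

lemma hkVar0_lowerCorner :
    hkVar0 (fun x => ν (lowerCorner x))
      = (distribFun ν.toJordanDecomposition.posPart 1
          - distribFun ν.toJordanDecomposition.posPart 0)
        + (distribFun ν.toJordanDecomposition.negPart 1
          - distribFun ν.toJordanDecomposition.negPart 0) := by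
  rw [hkVar0, hkVarOn, Finset.sum_congr rfl fun S _ => ν.vitaliVar_lowerCorner S,
    Finset.sum_add_distrib, sum_measureReal_faceBox, sum_measureReal_faceBox]

lemma totalVariation_eq_hkVar0_add :
    (ν.totalVariation Set.univ).toReal
      = hkVar0 (fun x => ν (lowerCorner x)) + |ν (lowerCorner 0)| := by
  have hzero : |ν (lowerCorner 0)| = distribFun ν.toJordanDecomposition.posPart 0
      + distribFun ν.toJordanDecomposition.negPart 0 := by
    rw [congrFun (apply_lowerCorner_eq_distribFun_sub ν) 0, Pi.sub_apply, distribFun, distribFun,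
      lowerCorner_zero]
    rcases ν.toJordanDecomposition.mutuallySingular.measure_singleton_eq_zero_or
      ⟨0, Set.left_mem_Icc.2 zero_le_one⟩ with h | h <;>
      simp only [measureReal_def, h, ENNReal.toReal_zero, zero_sub, sub_zero, abs_neg, zero_add,
        add_zero, abs_of_nonneg ENNReal.toReal_nonneg]
  rw [hzero, hkVar0_lowerCorner, totalVariation, Measure.add_apply,
    ENNReal.toReal_add (measure_ne_top _ _) (measure_ne_top _ _)]
  simp only [distribFun, lowerCorner_one, measureReal_def]
  ring

lemma quasiVol_sub_distribFun_posPart_nonneg {fp fm : (Fin d → ℝ) → ℝ}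
    (hfp : CompletelyMonotone fp) (hfm : CompletelyMonotone fm)
    (hdec : ∀ x ∈ Set.Icc (0 : Fin d → ℝ) 1,
      ν (lowerCorner x) = ν (lowerCorner 0) + fp x - fm x)
    {S : Finset (Fin d)} (hS : S.Nonempty) {a b : Fin d → ℝ} (ha : a ∈ Set.Icc 0 1)
    (hb : b ∈ Set.Icc 0 1) (hab : a ≤ b) :
    0 ≤ quasiVol (fp - distribFun ν.toJordanDecomposition.posPart) S 0 a b := by
  set μp := ν.toJordanDecomposition.posPart
  set μm := ν.toJordanDecomposition.negPart
  have hD : Set.EqOn (fp - distribFun μp) (fm - distribFun μm - fun _ => ν (lowerCorner 0))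
      (Set.Icc 0 1) := fun y hy => by
    have hfy := congrFun (apply_lowerCorner_eq_distribFun_sub ν) y
    simp only [Pi.sub_apply] at hfy ⊢
    linarith [hdec y hy]
  refine quasiVol_nonneg_of_neg_min_le ν.toJordanDecomposition.mutuallySingular
    (fun a b ha hb hab => ?_) ha hb hab
  have hp := hfp.quasiVol_nonneg hS (fun i _ => ha.1 i) (fun i _ => hab i) fun i _ => hb.2 i
  have hm := hfm.quasiVol_nonneg hS (fun i _ => ha.1 i) (fun i _ => hab i) fun i _ => hb.2 i
  have hDp : quasiVol (fp - distribFun μp) S 0 a b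
      = quasiVol fp S 0 a b - μp.real (faceBox S 0 a b) := by
    rw [quasiVol_sub, quasiVol_distribFun _ fun i _ => hab i]
  have hDm : quasiVol (fp - distribFun μp) S 0 a b
      = quasiVol fm S 0 a b - μm.real (faceBox S 0 a b) := by
    rw [quasiVol_congr_of_eqOn hD S (Set.left_mem_Icc.2 zero_le_one) ha hb, quasiVol_sub,
      quasiVol_sub, quasiVol_const _ hS, sub_zero, quasiVol_distribFun _ fun i _ => hab i]
  rcases min_choice (μp.real (faceBox S 0 a b)) (μm.real (faceBox S 0 a b)) with h | h <;>
    rw [h] <;> linarith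

lemma sub_apply_zero_eq_of_completelyMonotone {fp fm : (Fin d → ℝ) → ℝ}
    (hfp : CompletelyMonotone fp) (hfm : CompletelyMonotone fm)
    (hdec : ∀ x ∈ Set.Icc (0 : Fin d → ℝ) 1,
      ν (lowerCorner x) = ν (lowerCorner 0) + fp x - fm x)
    (hvar : hkVar0 (fun x => ν (lowerCorner x)) = hkVar0 fp + hkVar0 fm)
    {x : Fin d → ℝ} (hx : x ∈ Set.Icc 0 1) :
    fp x - fp 0 = distribFun ν.toJordanDecomposition.posPart x
      - distribFun ν.toJordanDecomposition.posPart 0 := by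
  set D := fp - distribFun ν.toJordanDecomposition.posPart
  have hD : ∀ S ∈ (Finset.univ : Finset (Fin d)).powerset.erase ∅, ∀ a b,
      a ∈ Set.Icc 0 1 → b ∈ Set.Icc 0 1 → a ≤ b → 0 ≤ quasiVol D S 0 a b := fun S hS _ _ =>
    ν.quasiVol_sub_distribFun_posPart_nonneg hfp hfm hdec
      (Finset.nonempty_iff_ne_empty.2 (Finset.ne_of_mem_erase hS))
  have hD1 : D 1 = D 0 := by
    have hf : ∀ y, ν (lowerCorner y) = distribFun ν.toJordanDecomposition.posPart y
        - distribFun ν.toJordanDecomposition.negPart y :=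
      congrFun (apply_lowerCorner_eq_distribFun_sub ν)
    rw [hkVar0_lowerCorner, hfp.hkVar0_eq, hfm.hkVar0_eq] at hvar
    simp only [D, Pi.sub_apply]
    linarith [hdec 0 (Set.left_mem_Icc.2 zero_le_one), hdec 1 (Set.right_mem_Icc.2 zero_le_one),
      hf 0, hf 1]
  have hS1 : ∀ S ∈ (Finset.univ : Finset (Fin d)).powerset.erase ∅, quasiVol D S 0 0 1 = 0 :=
    (Finset.sum_eq_zero_iff_of_nonneg fun S hS =>
      hD S hS 0 1 (Set.left_mem_Icc.2 zero_le_one) (Set.right_mem_Icc.2 zero_le_one)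
        zero_le_one).1 (by rw [sum_quasiVol_zero, hD1, sub_self])
  have hSx : ∀ S ∈ (Finset.univ : Finset (Fin d)).powerset.erase ∅, quasiVol D S 0 0 x = 0 :=
    fun S hS => le_antisymm
      ((quasiVol_zero_le_quasiVol_zero_one (hD S hS) hx).trans_eq (hS1 S hS))
      (hD S hS 0 x (Set.left_mem_Icc.2 zero_le_one) hx hx.1)
  have hDx := sum_quasiVol_zero D x
  rw [Finset.sum_eq_zero hSx] at hDx
  simp only [D, Pi.sub_apply] at hDx
  linarith

end MeasureTheory.SignedMeasure

lemma measureReal_preimage_Icc_sdiff_zero {d : ℕ} (μ : MeasureTheory.Measure (UnitCube d))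
    [MeasureTheory.IsFiniteMeasure μ] {x : Fin d → ℝ} (hx : 0 ≤ x) :
    μ.real (Subtype.val ⁻¹' (Set.Icc 0 x \ {0})) = distribFun μ x - distribFun μ 0 := by
  rw [Set.preimage_sdiff, ← Set.Icc_self, MeasureTheory.measureReal_sdiff
    (Set.preimage_mono (Set.Icc_subset_Icc le_rfl hx)) (measurableSet_lowerCorner 0)]
  rfl

/-- Every finite signed Borel measure on `[0,1]^d` arises from a unique right-continuous
function of bounded HK-variation, with matching total variation and Jordan decompositions. -/
theorem stmt5 {d : ℕ} (ν : MeasureTheory.SignedMeasure (Set.Icc (0 : Fin d → ℝ) 1)) :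
    ∃ f : (Fin d → ℝ) → ℝ, RightCts f ∧ BddHKVar f ∧
      (∀ x ∈ Set.Icc (0 : Fin d → ℝ) 1,
        f x = ν (Subtype.val ⁻¹' Set.Icc (0 : Fin d → ℝ) x)) ∧
      (ν.totalVariation Set.univ).toReal = hkVar0 f + |f 0| ∧
      (∀ f' : (Fin d → ℝ) → ℝ, RightCts f' → BddHKVar f' →
        (∀ x ∈ Set.Icc (0 : Fin d → ℝ) 1,
          f' x = ν (Subtype.val ⁻¹' Set.Icc (0 : Fin d → ℝ) x)) →
        ∀ x ∈ Set.Icc (0 : Fin d → ℝ) 1, f' x = f x) ∧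
      ∀ fp fm : (Fin d → ℝ) → ℝ,
        CompletelyMonotone fp → CompletelyMonotone fm → fp 0 = 0 → fm 0 = 0 →
        (∀ x ∈ Set.Icc (0 : Fin d → ℝ) 1, f x = f 0 + fp x - fm x) →
        hkVar0 f = hkVar0 fp + hkVar0 fm →
        ∀ x ∈ Set.Icc (0 : Fin d → ℝ) 1,
          fp x = (ν.toJordanDecomposition.posPart
            (Subtype.val ⁻¹' (Set.Icc (0 : Fin d → ℝ) x \ {0}))).toReal ∧
          fm x = (ν.toJordanDecomposition.negPart
            (Subtype.val ⁻¹' (Set.Icc (0 : Fin d → ℝ) x \ {0}))).toReal := by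
  refine ⟨fun x => ν (lowerCorner x), ν.rightCts_lowerCorner, ν.bddHKVar_lowerCorner,
    fun _ _ => rfl, ν.totalVariation_eq_hkVar0_add, fun f' _ _ hf' x hx => hf' x hx, ?_⟩
  intro fp fm hfp hfm hfp0 hfm0 hdec hvar x hx
  have hp := ν.sub_apply_zero_eq_of_completelyMonotone hfp hfm hdec hvar hx
  have hf := congrFun (ν.apply_lowerCorner_eq_distribFun_sub)
  rw [← MeasureTheory.measureReal_def, ← MeasureTheory.measureReal_def,
    measureReal_preimage_Icc_sdiff_zero _ hx.1, measureReal_preimage_Icc_sdiff_zero _ hx.1]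
  have h := hdec x hx
  simp only [hf, Pi.sub_apply] at h
  constructor <;> linarith
end
end
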